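/- arXiv:2502.17317 — 14 statements merged into one kernel-verified Lean document; each statement's English description precedes it below -/
import Mathlib

section
/- If a 6×6 Hermitian complex matrix A = (a_{j,k}) is weakly positive, then all diagonal entries satisfy a_{j,j} ≥ 0, and for all indices j ≠ k with j + k ≠ 7 one has |a_{j,k}| ≤ (a_{j,j} + a_{k,k})/2. -/
open Matrix
open scoped ComplexOrder

/-- The Plücker quadric in ℂ⁶: coordinate vectors z = (z₁,…,z₆) (here indexed
z 0,…,z 5) satisfying z₁z₆ + z₂z₅ + z₃z₄ = 0. These are exactly the coordinate
vectors, in the basis φ¹,…,φ⁶, of decomposable (2,0)-forms on ℂ⁴. -/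
def PluckerQuadric : Set (Fin 6 → ℂ) :=
  {z | z 0 * z 5 + z 1 * z 4 + z 2 * z 3 = 0}

/-- A 6×6 complex matrix is weakly positive if its Hermitian form is
nonnegative on the Plücker quadric. -/
def WeaklyPositive (A : Matrix (Fin 6) (Fin 6) ℂ) : Prop :=
  ∀ z ∈ PluckerQuadric, 0 ≤ star z ⬝ᵥ A.mulVec z

/-- A 6×6 complex matrix is strictly weakly positive if its Hermitian form is
positive on nonzero vectors of the Plücker quadric. -/
def StrictlyWeaklyPositive (A : Matrix (Fin 6) (Fin 6) ℂ) : Prop :=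
  ∀ z ∈ PluckerQuadric, z ≠ 0 → 0 < star z ⬝ᵥ A.mulVec z

/-- A 6×6 complex matrix is strongly positive if it is a finite sum of outer
products v vᴴ with v in the Plücker quadric. -/
def StronglyPositive (A : Matrix (Fin 6) (Fin 6) ℂ) : Prop :=
  ∃ (n : ℕ) (v : Fin n → Fin 6 → ℂ), (∀ i, v i ∈ PluckerQuadric) ∧
    A = ∑ i, vecMulVec (v i) (star (v i))

/-- The matrix A_a: the identity matrix except that the (j,k) entry is a
and the (k,j) entry is conj a. -/
def Amat (j k : Fin 6) (a : ℂ) : Matrix (Fin 6) (Fin 6) ℂ :=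
  1 + Matrix.single j k a + Matrix.single k j (starRingEnd ℂ a)

lemma single_mem_pluecker (j : Fin 6) (c : ℂ) : Pi.single j c ∈ PluckerQuadric := by
  fin_cases j <;> simp [PluckerQuadric, Pi.single_apply]

lemma pair_mem_pluecker (j k : Fin 6) (h : j ≠ k) (h5 : (j : ℕ) + (k : ℕ) ≠ 5) (c d : ℂ) :
    Pi.single j c + Pi.single k d ∈ PluckerQuadric := by
  fin_cases j <;> fin_cases k <;> simp_all [PluckerQuadric, Pi.single_apply]

lemma quad_pair (A : Matrix (Fin 6) (Fin 6) ℂ) (j k : Fin 6) (c d : ℂ) :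
    star (Pi.single j c + Pi.single k d) ⬝ᵥ A.mulVec (Pi.single j c + Pi.single k d)
    = (starRingEnd ℂ c) * (A j j * c) + (starRingEnd ℂ c) * (A j k * d)
      + (starRingEnd ℂ d) * (A k j * c) + (starRingEnd ℂ d) * (A k k * d) := by
  simp [mulVec_add, mulVec_single, dotProduct_add, star_add, single_dotProduct,
    ← Pi.single_star, Complex.star_def]
  ring

/-- If a 6×6 Hermitian matrix A is weakly positive, then its diagonal entries
are nonnegative, and |a_{j,k}| ≤ (a_{j,j} + a_{k,k})/2 for all j ≠ k with
j + k ≠ 7 (1-indexed; with 0-indexing, j + k ≠ 5). -/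
theorem weaklyPositive_offDiag_bound (A : Matrix (Fin 6) (Fin 6) ℂ)
    (hA : A.IsHermitian) (hwp : WeaklyPositive A) :
    (∀ j : Fin 6, 0 ≤ (A j j).re) ∧
    (∀ j k : Fin 6, j ≠ k → (j : ℕ) + (k : ℕ) ≠ 5 →
      ‖A j k‖ ≤ ((A j j).re + (A k k).re) / 2) := by
  have hdiag : ∀ j : Fin 6, 0 ≤ (A j j).re := by
    intro j
    have := hwp (Pi.single j 1) (single_mem_pluecker j 1)
    rw [Complex.le_def] at this
    have h : star (Pi.single j (1:ℂ)) ⬝ᵥ A.mulVec (Pi.single j 1) = A j j := by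
      simp [mulVec_single, single_dotProduct, ← Pi.single_star]
    rw [h] at this
    simpa using this.1
  refine ⟨hdiag, ?_⟩
  intro j k hjk h5
  set a := A j k with ha
  by_cases haz : a = 0
  · have := hdiag j; have := hdiag k
    simp [← ha, haz]
    linarith
  · set r : ℝ := ‖a‖ with hr
    have hrpos : 0 < r := by rw [hr]; exact norm_pos_iff.mpr haz
    have hrc : (r : ℂ) ≠ 0 := by exact_mod_cast hrpos.ne'
    set d : ℂ := -(starRingEnd ℂ a) / r with hd
    have hmem := pair_mem_pluecker j k hjk h5 1 d
    have hpos := hwp _ hmem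
    rw [quad_pair] at hpos
    have hkj : A k j = starRingEnd ℂ a := by rw [ha]; exact (hA.apply k j).symm
    have hac : a * starRingEnd ℂ a = ((r^2 : ℝ) : ℂ) := by
      rw [Complex.mul_conj, Complex.normSq_eq_norm_sq, ← hr]
    have hcd : starRingEnd ℂ d = -a / r := by
      rw [hd]; simp [map_div₀, Complex.conj_ofReal]
    have h1 : a * d = -(r:ℂ) := by
      rw [hd]; field_simp; rw [hac]; push_cast; ring
    have h2 : starRingEnd ℂ d * starRingEnd ℂ a = -(r:ℂ) := by
      rw [hcd]; field_simp; rw [hac]; push_cast; ring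
    have h3 : starRingEnd ℂ d * d = 1 := by
      rw [hcd, hd]; field_simp; rw [hac]; push_cast; ring
    have hval : (starRingEnd ℂ 1) * (A j j * 1) + (starRingEnd ℂ 1) * (A j k * d)
        + (starRingEnd ℂ d) * (A k j * 1) + (starRingEnd ℂ d) * (A k k * d)
        = A j j + A k k + ((-(2 * r) : ℝ) : ℂ) := by
      rw [hkj, ← ha]; simp only [_root_.map_one, one_mul, mul_one]; push_cast
      linear_combination h1 + h2 + A k k * h3
    rw [hval, Complex.le_def] at hpos
    have hre := hpos.1
    simp [Complex.add_re, Complex.ofReal_re] at hre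
    linarith
end

section
/- If a 6×6 Hermitian complex matrix A = (a_{j,k}) is strictly weakly positive, then all diagonal entries satisfy a_{j,j} > 0, and for all indices j ≠ k with j + k ≠ 7 one has |a_{j,k}| < (a_{j,j} + a_{k,k})/2. -/
open Matrix
open scoped ComplexOrder

lemma mem_quad (j k : Fin 6) (hjk : j ≠ k) (h5 : (j : ℕ) + (k : ℕ) ≠ 5) (a b : ℂ) :
    (Pi.single j a + Pi.single k b) ∈ PluckerQuadric := by
  fin_cases j <;> fin_cases k <;>
    simp_all [PluckerQuadric, Pi.single_apply]

lemma quad_val (A : Matrix (Fin 6) (Fin 6) ℂ) (j k : Fin 6) (a b : ℂ) :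
    star (Pi.single j a + Pi.single k b) ⬝ᵥ A.mulVec (Pi.single j a + Pi.single k b)
      = star a * a * A j j + star a * b * A j k + star b * a * A k j + star b * b * A k k := by
  rw [star_add, ← Pi.single_star, ← Pi.single_star, Matrix.mulVec_add,
    Matrix.mulVec_single, Matrix.mulVec_single]
  simp [add_dotProduct, dotProduct_add, single_dotProduct]
  ring

lemma single_ne (j k : Fin 6) (hjk : j ≠ k) (a b : ℂ) (ha : a ≠ 0) :
    (Pi.single j a + Pi.single k b : Fin 6 → ℂ) ≠ 0 := by
  intro H
  apply ha
  have := congrFun H j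
  simpa [Pi.single_apply, hjk] using this

lemma key (A : Matrix (Fin 6) (Fin 6) ℂ) (hwp : StrictlyWeaklyPositive A)
    (j k : Fin 6) (hjk : j ≠ k) (h5 : (j : ℕ) + (k : ℕ) ≠ 5) (a b : ℂ) (ha : a ≠ 0) :
    0 < star a * a * A j j + star a * b * A j k + star b * a * A k j + star b * b * A k k := by
  rw [← quad_val A j k a b]
  exact hwp _ (mem_quad j k hjk h5 a b) (single_ne j k hjk a b ha)

/-- If a 6×6 Hermitian matrix A is strictly weakly positive, then its diagonal
entries are positive, and |a_{j,k}| < (a_{j,j} + a_{k,k})/2 for all j ≠ k with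
j + k ≠ 7 (1-indexed; with 0-indexing, j + k ≠ 5). -/
theorem strictlyWeaklyPositive_offDiag_bound (A : Matrix (Fin 6) (Fin 6) ℂ)
    (hA : A.IsHermitian) (hwp : StrictlyWeaklyPositive A) :
    (∀ j : Fin 6, 0 < (A j j).re) ∧
    (∀ j k : Fin 6, j ≠ k → (j : ℕ) + (k : ℕ) ≠ 5 →
      ‖A j k‖ < ((A j j).re + (A k k).re) / 2) := by
  have hd : ∀ j : Fin 6, 0 < (A j j).re := by
    intro j
    obtain ⟨k, hne, h5⟩ : ∃ k : Fin 6, j ≠ k ∧ (j : ℕ) + (k : ℕ) ≠ 5 := by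
      revert j; decide
    have h := key A hwp j k hne h5 1 0 one_ne_zero
    simp only [star_one, one_mul, star_zero, zero_mul, mul_zero, add_zero] at h
    exact (Complex.lt_def.mp h).1
  refine ⟨hd, fun j k hjk h5 => ?_⟩
  rcases eq_or_ne (A j k) 0 with h0 | h0
  · have := hd j; have := hd k
    simp only [h0, map_zero, norm_zero]
    linarith
  · set m : ℝ := ‖A j k‖ with hm
    have hm0 : (0:ℝ) < m := norm_pos_iff.mpr h0
    have hmC : (m : ℂ) ≠ 0 := by exact_mod_cast hm0.ne'
    have hconj : (starRingEnd ℂ) (A j k) * A j k = (m : ℂ) ^ 2 := by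
      rw [mul_comm, Complex.mul_conj]
      rw [hm, ← Complex.sq_norm]
      push_cast; ring
    set b : ℂ := -((starRingEnd ℂ) (A j k)) / m with hb
    have hkj : A k j = (starRingEnd ℂ) (A j k) := (hA.apply k j).symm
    have h := key A hwp j k hjk h5 1 b one_ne_zero
    have hsb : star b = -(A j k) / m := by
      simp [hb, map_div₀, Complex.conj_ofReal]
    have e1 : b * A j k = -(m : ℂ) := by
      rw [hb, div_mul_eq_mul_div, neg_mul, hconj, neg_div, sq, mul_div_assoc,
        div_self hmC, mul_one]
    have e2 : star b * A k j = -(m : ℂ) := by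
      rw [hsb, hkj, div_mul_eq_mul_div, neg_mul, mul_comm, hconj, neg_div, sq,
        mul_div_assoc, div_self hmC, mul_one]
    have e3 : star b * b = 1 := by
      rw [hsb, hb, div_mul_div_comm, neg_mul_neg, mul_comm (A j k), hconj, sq,
        div_self (mul_ne_zero hmC hmC)]
    have hval : star (1:ℂ) * 1 * A j j + star (1:ℂ) * b * A j k + star b * 1 * A k j
        + star b * b * A k k = A j j + A k k - 2 * m := by
      rw [star_one, one_mul, one_mul, one_mul, mul_one, e1, e2, e3, one_mul]
      ring
    rw [hval] at h
    have hre := (Complex.lt_def.mp h).1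
    simp [Complex.sub_re, Complex.add_re, Complex.mul_re] at hre
    linarith
end

section
/- Let A = (a_{j,k}) be a weakly positive 6×6 Hermitian complex matrix. Then for all pairs (j,k) ≠ (l,m) with j < k, l < m and j + k = l + m = 7, both |a_{j,k} + a_{l,m}| ≤ (a_{j,j} + a_{k,k} + a_{l,l} + a_{m,m})/2 and |a_{j,k} − a_{l,m}| ≤ (a_{j,j} + a_{k,k} + a_{l,l} + a_{m,m})/2 hold. -/
open Matrix
open scoped ComplexOrder

def zvec (p q r s : Fin 6) (a b c d : ℂ) : Fin 6 → ℂ :=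
  a • (Pi.single p 1 : Fin 6 → ℂ) + b • (Pi.single q 1 : Fin 6 → ℂ) +
    c • (Pi.single r 1 : Fin 6 → ℂ) + d • (Pi.single s 1 : Fin 6 → ℂ)

lemma star_single (p : Fin 6) :
    star (Pi.single p (1 : ℂ) : Fin 6 → ℂ) = (Pi.single p 1 : Fin 6 → ℂ) := by
  funext i
  simp [Pi.single_apply, apply_ite]

lemma expandQ (A : Matrix (Fin 6) (Fin 6) ℂ) (p q r s : Fin 6) (a b c d : ℂ) :
    star (zvec p q r s a b c d) ⬝ᵥ A.mulVec (zvec p q r s a b c d) =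
      (starRingEnd ℂ a) * a * A p p + (starRingEnd ℂ a) * b * A p q +
      (starRingEnd ℂ a) * c * A p r + (starRingEnd ℂ a) * d * A p s +
      (starRingEnd ℂ b) * a * A q p + (starRingEnd ℂ b) * b * A q q +
      (starRingEnd ℂ b) * c * A q r + (starRingEnd ℂ b) * d * A q s +
      (starRingEnd ℂ c) * a * A r p + (starRingEnd ℂ c) * b * A r q +
      (starRingEnd ℂ c) * c * A r r + (starRingEnd ℂ c) * d * A r s +
      (starRingEnd ℂ d) * a * A s p + (starRingEnd ℂ d) * b * A s q +
      (starRingEnd ℂ d) * c * A s r + (starRingEnd ℂ d) * d * A s s := by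
  simp only [zvec, star_add, star_smul, star_single, mulVec_add, mulVec_smul,
    mulVec_single, dotProduct_add, add_dotProduct, dotProduct_smul, smul_dotProduct,
    single_dotProduct, smul_eq_mul, Complex.star_def, MulOpposite.op_one, one_smul,
    Matrix.col_apply]
  ring

lemma arith_bound (d1 d2 d3 d4 : ℝ) (w : ℂ)
    (H : ∀ u : ℂ, ‖u‖ = 1 → 0 ≤ d1 + d2 + d3 + d4 + 2 * (u * w).re) :
    ‖w‖ ≤ (d1 + d2 + d3 + d4) / 2 := by
  by_cases hw : w = 0
  · have h1 := H 1 (by simp)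
    simp [hw] at h1 ⊢
    linarith
  · have habs : (0 : ℝ) < ‖w‖ := by
      exact norm_pos_iff.mpr hw
    set u : ℂ := -(starRingEnd ℂ w) / (‖w‖ : ℂ) with hu_def
    have hu : ‖u‖ = 1 := by
      rw [hu_def, norm_div, norm_neg, Complex.norm_conj, Complex.norm_real,
        norm_norm, div_self habs.ne']
    have huw : (u * w).re = -(‖w‖) := by
      have h1 : u * w = -((‖w‖ : ℝ) : ℂ) := by
        have hne : ((‖w‖ : ℝ) : ℂ) ≠ 0 := by exact_mod_cast habs.ne'
        rw [hu_def, neg_div, neg_mul, div_mul_eq_mul_div, mul_comm (starRingEnd ℂ w) w,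
          Complex.mul_conj, Complex.normSq_eq_norm_sq]
        push_cast
        rw [pow_two, mul_div_assoc, div_self hne, mul_one]
      rw [h1]
      simp
    have := H u hu
    rw [huw] at this
    linarith

lemma master (A : Matrix (Fin 6) (Fin 6) ℂ) (hA : A.IsHermitian) (hwp : WeaklyPositive A)
    (p q r s : Fin 6)
    (hz : ∀ a b c d : ℂ, a * b + c * d = 0 → zvec p q r s a b c d ∈ PluckerQuadric) :
    ‖A p q + A r s‖ ≤ ((A p p).re + (A q q).re + (A r r).re + (A s s).re) / 2 ∧
    ‖A p q - A r s‖ ≤ ((A p p).re + (A q q).re + (A r r).re + (A s s).re) / 2 := by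
  have herm : ∀ x y : Fin 6, A y x = starRingEnd ℂ (A x y) := by
    intro x y
    conv_lhs => rw [← hA]
    rfl
  have hI : Complex.I * Complex.I = -1 := Complex.I_mul_I
  have key : ∀ u : ℂ, ‖u‖ = 1 →
      (0 ≤ (A p p).re + (A q q).re + (A r r).re + (A s s).re +
          2 * (u * (A p q + A r s)).re) ∧
      (0 ≤ (A p p).re + (A q q).re + (A r r).re + (A s s).re +
          2 * (u * (A p q - A r s)).re) := by
    intro u hu
    have huu : (starRingEnd ℂ u) * u = 1 := by
      rw [mul_comm, Complex.mul_conj, Complex.normSq_eq_norm_sq, hu]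
      norm_num
    constructor
    · -- sum case: vectors (1,u,I,I*u) and (1,u,-I,-(I*u))
      have hq1 : 0 ≤ star (zvec p q r s 1 u Complex.I (Complex.I * u)) ⬝ᵥ
          A.mulVec (zvec p q r s 1 u Complex.I (Complex.I * u)) :=
        hwp _ (hz 1 u Complex.I (Complex.I * u) (by linear_combination u * hI))
      have hq2 : 0 ≤ star (zvec p q r s 1 u (-Complex.I) (-(Complex.I * u))) ⬝ᵥ
          A.mulVec (zvec p q r s 1 u (-Complex.I) (-(Complex.I * u))) :=
        hwp _ (hz 1 u (-Complex.I) (-(Complex.I * u)) (by linear_combination u * hI))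
      have h12 := add_nonneg hq1 hq2
      rw [expandQ, expandQ] at h12
      have hE : (starRingEnd ℂ 1) * 1 * A p p + (starRingEnd ℂ 1) * u * A p q +
          (starRingEnd ℂ 1) * Complex.I * A p r + (starRingEnd ℂ 1) * (Complex.I * u) * A p s +
          (starRingEnd ℂ u) * 1 * A q p + (starRingEnd ℂ u) * u * A q q +
          (starRingEnd ℂ u) * Complex.I * A q r + (starRingEnd ℂ u) * (Complex.I * u) * A q s +
          (starRingEnd ℂ Complex.I) * 1 * A r p + (starRingEnd ℂ Complex.I) * u * A r q +
          (starRingEnd ℂ Complex.I) * Complex.I * A r r +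
          (starRingEnd ℂ Complex.I) * (Complex.I * u) * A r s +
          (starRingEnd ℂ (Complex.I * u)) * 1 * A s p +
          (starRingEnd ℂ (Complex.I * u)) * u * A s q +
          (starRingEnd ℂ (Complex.I * u)) * Complex.I * A s r +
          (starRingEnd ℂ (Complex.I * u)) * (Complex.I * u) * A s s +
          ((starRingEnd ℂ 1) * 1 * A p p + (starRingEnd ℂ 1) * u * A p q +
          (starRingEnd ℂ 1) * (-Complex.I) * A p r +
          (starRingEnd ℂ 1) * (-(Complex.I * u)) * A p s +
          (starRingEnd ℂ u) * 1 * A q p + (starRingEnd ℂ u) * u * A q q +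
          (starRingEnd ℂ u) * (-Complex.I) * A q r +
          (starRingEnd ℂ u) * (-(Complex.I * u)) * A q s +
          (starRingEnd ℂ (-Complex.I)) * 1 * A r p + (starRingEnd ℂ (-Complex.I)) * u * A r q +
          (starRingEnd ℂ (-Complex.I)) * (-Complex.I) * A r r +
          (starRingEnd ℂ (-Complex.I)) * (-(Complex.I * u)) * A r s +
          (starRingEnd ℂ (-(Complex.I * u))) * 1 * A s p +
          (starRingEnd ℂ (-(Complex.I * u))) * u * A s q +
          (starRingEnd ℂ (-(Complex.I * u))) * (-Complex.I) * A s r +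
          (starRingEnd ℂ (-(Complex.I * u))) * (-(Complex.I * u)) * A s s) =
          2 * A p p + 2 * A q q + 2 * A r r + 2 * A s s +
          2 * (u * (A p q + A r s)) +
          2 * (starRingEnd ℂ (u * (A p q + A r s))) := by
        rw [herm p q, herm p r, herm p s, herm q r, herm q s, herm r s]
        simp only [_root_.map_mul, _root_.map_add, _root_.map_one, _root_.map_neg, Complex.conj_I]
        linear_combination (2 * A q q + (-2 * Complex.I * Complex.I) * A s s) * huu +
          (-2 * A r r - 2 * u * A r s -
            2 * (starRingEnd ℂ u) * (starRingEnd ℂ (A r s)) - 2 * A s s) * hI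
      rw [hE] at h12
      have hre := (Complex.le_def.mp h12).1
      simp only [Complex.add_re, Complex.add_im, Complex.sub_re, Complex.sub_im,
        Complex.zero_re, Complex.mul_re, Complex.conj_re, Complex.conj_im] at hre ⊢
      norm_num at hre
      linarith [hre]
    · -- diff case: vectors (1,u,1,-u) and (1,u,-1,u)
      have hq1 : 0 ≤ star (zvec p q r s 1 u 1 (-u)) ⬝ᵥ
          A.mulVec (zvec p q r s 1 u 1 (-u)) :=
        hwp _ (hz 1 u 1 (-u) (by ring))
      have hq2 : 0 ≤ star (zvec p q r s 1 u (-1) u) ⬝ᵥ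
          A.mulVec (zvec p q r s 1 u (-1) u) :=
        hwp _ (hz 1 u (-1) u (by ring))
      have h12 := add_nonneg hq1 hq2
      rw [expandQ, expandQ] at h12
      have hE : (starRingEnd ℂ 1) * 1 * A p p + (starRingEnd ℂ 1) * u * A p q +
          (starRingEnd ℂ 1) * 1 * A p r + (starRingEnd ℂ 1) * (-u) * A p s +
          (starRingEnd ℂ u) * 1 * A q p + (starRingEnd ℂ u) * u * A q q +
          (starRingEnd ℂ u) * 1 * A q r + (starRingEnd ℂ u) * (-u) * A q s +
          (starRingEnd ℂ 1) * 1 * A r p + (starRingEnd ℂ 1) * u * A r q +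
          (starRingEnd ℂ 1) * 1 * A r r + (starRingEnd ℂ 1) * (-u) * A r s +
          (starRingEnd ℂ (-u)) * 1 * A s p + (starRingEnd ℂ (-u)) * u * A s q +
          (starRingEnd ℂ (-u)) * 1 * A s r + (starRingEnd ℂ (-u)) * (-u) * A s s +
          ((starRingEnd ℂ 1) * 1 * A p p + (starRingEnd ℂ 1) * u * A p q +
          (starRingEnd ℂ 1) * (-1) * A p r + (starRingEnd ℂ 1) * u * A p s +
          (starRingEnd ℂ u) * 1 * A q p + (starRingEnd ℂ u) * u * A q q +
          (starRingEnd ℂ u) * (-1) * A q r + (starRingEnd ℂ u) * u * A q s +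
          (starRingEnd ℂ (-1)) * 1 * A r p + (starRingEnd ℂ (-1)) * u * A r q +
          (starRingEnd ℂ (-1)) * (-1) * A r r + (starRingEnd ℂ (-1)) * u * A r s +
          (starRingEnd ℂ u) * 1 * A s p + (starRingEnd ℂ u) * u * A s q +
          (starRingEnd ℂ u) * (-1) * A s r + (starRingEnd ℂ u) * u * A s s) =
          2 * A p p + 2 * A q q + 2 * A r r + 2 * A s s +
          2 * (u * (A p q - A r s)) +
          2 * (starRingEnd ℂ (u * (A p q - A r s))) := by
        rw [herm p q, herm p r, herm p s, herm q r, herm q s, herm r s]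
        simp only [_root_.map_mul, _root_.map_add, _root_.map_sub, _root_.map_one, _root_.map_neg, Complex.conj_I]
        linear_combination (2 * A q q + 2 * A s s) * huu
      rw [hE] at h12
      have hre := (Complex.le_def.mp h12).1
      simp only [Complex.add_re, Complex.add_im, Complex.sub_re, Complex.sub_im,
        Complex.zero_re, Complex.mul_re, Complex.conj_re, Complex.conj_im] at hre ⊢
      norm_num at hre
      linarith [hre]
  constructor
  · exact arith_bound _ _ _ _ _ (fun u hu => (key u hu).1)
  · exact arith_bound _ _ _ _ _ (fun u hu => (key u hu).2)

/-- If a 6×6 Hermitian matrix A is weakly positive, then for all pairs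
(j,k) ≠ (l,m) with j < k, l < m on the anti-diagonal (j + k = l + m = 7,
1-indexed; i.e. = 5 with 0-indexing), both
|a_{j,k} + a_{l,m}| and |a_{j,k} − a_{l,m}| are at most
(a_{j,j} + a_{k,k} + a_{l,l} + a_{m,m})/2. -/
theorem weaklyPositive_antiDiag_sum_diff_bound (A : Matrix (Fin 6) (Fin 6) ℂ)
    (hA : A.IsHermitian) (hwp : WeaklyPositive A)
    (j k l m : Fin 6) (hjk : j < k) (hlm : l < m)
    (h1 : (j : ℕ) + (k : ℕ) = 5) (h2 : (l : ℕ) + (m : ℕ) = 5)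
    (hne : (j, k) ≠ (l, m)) :
    ‖A j k + A l m‖ ≤
      ((A j j).re + (A k k).re + (A l l).re + (A m m).re) / 2 ∧
    ‖A j k - A l m‖ ≤
      ((A j j).re + (A k k).re + (A l l).re + (A m m).re) / 2 := by
  have hcases1 : (j = 0 ∧ k = 5) ∨ (j = 1 ∧ k = 4) ∨ (j = 2 ∧ k = 3) := by omega
  have hcases2 : (l = 0 ∧ m = 5) ∨ (l = 1 ∧ m = 4) ∨ (l = 2 ∧ m = 3) := by omega
  rcases hcases1 with ⟨rfl, rfl⟩ | ⟨rfl, rfl⟩ | ⟨rfl, rfl⟩ <;>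
    rcases hcases2 with ⟨rfl, rfl⟩ | ⟨rfl, rfl⟩ | ⟨rfl, rfl⟩ <;>
    first
      | exact absurd rfl hne
      | exact master A hA hwp _ _ _ _ (fun a b c d h => by
          simp only [PluckerQuadric, zvec, Set.mem_setOf_eq, Pi.add_apply, Pi.smul_apply,
            Pi.single_apply, smul_eq_mul, Fin.reduceEq, reduceIte]
          linear_combination h)
end

section
/- Let A = (a_{j,k}) be a weakly positive 6×6 Hermitian complex matrix. Then for all pairs (j,k) ≠ (l,m) with j < k, l < m and j + k = l + m = 7, the anti-diagonal entry a_{j,k} satisfies |a_{j,k}| ≤ (a_{j,j} + a_{k,k} + a_{l,l} + a_{m,m})/2. -/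
open Matrix
open scoped ComplexOrder

/-- Auxiliary test vector supported on four coordinates. -/
def zq (p q u v : Fin 6) (α β γ δ : ℂ) : Fin 6 → ℂ :=
  Pi.single p α + Pi.single q β + Pi.single u γ + Pi.single v δ

lemma Q_eval (A : Matrix (Fin 6) (Fin 6) ℂ) (p q u v : Fin 6) (α β γ δ : ℂ) :
    star (zq p q u v α β γ δ) ⬝ᵥ A *ᵥ zq p q u v α β γ δ =
      (starRingEnd ℂ α) * (A p p * α + A p q * β + A p u * γ + A p v * δ)
    + (starRingEnd ℂ β) * (A q p * α + A q q * β + A q u * γ + A q v * δ)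
    + (starRingEnd ℂ γ) * (A u p * α + A u q * β + A u u * γ + A u v * δ)
    + (starRingEnd ℂ δ) * (A v p * α + A v q * β + A v u * γ + A v v * δ) := by
  simp only [zq, star_add, ← Pi.single_star, mulVec_add, mulVec_single, add_dotProduct,
    single_dotProduct, Pi.add_apply, RCLike.star_def, Pi.smul_apply, op_smul_eq_mul, col_apply]

lemma key_s6 (A : Matrix (Fin 6) (Fin 6) ℂ) (hA : A.IsHermitian) (hwp : WeaklyPositive A)
    (p q u v : Fin 6)
    (hquad : ∀ α β γ δ : ℂ, α * β + γ * δ = 0 → zq p q u v α β γ δ ∈ PluckerQuadric) :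
    ‖A p q‖ ≤ ((A p p).re + (A q q).re + (A u u).re + (A v v).re) / 2 := by
  have hQ : ∀ α β γ δ : ℂ, α * β + γ * δ = 0 →
      (0:ℂ) ≤ (starRingEnd ℂ α) * (A p p * α + A p q * β + A p u * γ + A p v * δ)
    + (starRingEnd ℂ β) * (A q p * α + A q q * β + A q u * γ + A q v * δ)
    + (starRingEnd ℂ γ) * (A u p * α + A u q * β + A u u * γ + A u v * δ)
    + (starRingEnd ℂ δ) * (A v p * α + A v q * β + A v u * γ + A v v * δ) := by
    intro α β γ δ h
    rw [← Q_eval]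
    exact hwp _ (hquad α β γ δ h)
  -- diagonal entries nonneg
  have hdp : 0 ≤ (A p p).re := by
    have := hQ 1 0 0 0 (by ring)
    simp only [_root_.map_one, _root_.map_zero, one_mul, zero_mul, mul_zero, mul_one,
      add_zero, zero_add] at this
    exact (Complex.le_def.mp this).1
  have hdq : 0 ≤ (A q q).re := by
    have := hQ 0 1 0 0 (by ring)
    simp only [_root_.map_one, _root_.map_zero, one_mul, zero_mul, mul_zero, mul_one,
      add_zero, zero_add] at this
    exact (Complex.le_def.mp this).1
  have hdu : 0 ≤ (A u u).re := by
    have := hQ 0 0 1 0 (by ring)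
    simp only [_root_.map_one, _root_.map_zero, one_mul, zero_mul, mul_zero, mul_one,
      add_zero, zero_add] at this
    exact (Complex.le_def.mp this).1
  have hdv : 0 ≤ (A v v).re := by
    have := hQ 0 0 0 1 (by ring)
    simp only [_root_.map_one, _root_.map_zero, one_mul, zero_mul, mul_zero, mul_one,
      add_zero, zero_add] at this
    exact (Complex.le_def.mp this).1
  set a : ℂ := A p q with ha_def
  by_cases ha : a = 0
  · rw [ha]
    simp only [norm_zero]
    linarith
  · set r : ℝ := ‖a‖ with hr_def
    have hr0 : 0 < r := hr_def ▸ norm_pos_iff.mpr ha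
    have hqp : A q p = starRingEnd ℂ a := by
      rw [ha_def, ← hA.apply q p, Complex.star_def]
    have hsa : starRingEnd ℂ a * a = (r:ℂ)^2 := by
      rw [mul_comm, Complex.mul_conj]
      norm_cast
      exact (Complex.sq_norm a).symm
    have h1 := hQ (-a) (r:ℂ) (r:ℂ) a (by ring)
    have h2 := hQ (-a) (r:ℂ) (-(r:ℂ)) (-a) (by ring)
    have h3 := hQ (-a) (r:ℂ) (Complex.I * r) (-(Complex.I * a))
      (by linear_combination (-(r:ℂ) * a) * Complex.I_sq)
    have h4 := hQ (-a) (r:ℂ) (-(Complex.I * r)) (Complex.I * a)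
      (by linear_combination (-(r:ℂ) * a) * Complex.I_sq)
    have hsum := add_nonneg (add_nonneg (add_nonneg h1 h2) h3) h4
    have hval : (0:ℂ) ≤ ((4 * r^2 : ℝ) : ℂ) *
        ((A p p + A q q + A u u + A v v) - ((2*r : ℝ) : ℂ)) := by
      refine le_of_le_of_eq hsum ?_
      rw [hqp]
      simp only [map_neg, _root_.map_mul, Complex.conj_ofReal, Complex.conj_I]
      push_cast
      linear_combination (4 * A p p + 4 * A v v - 8 * (r:ℂ)) * hsa +
        (-2 * (starRingEnd ℂ a) * a * A v v - 2 * (r:ℂ)^2 * A u u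
          + 2 * (r:ℂ) * a * A u v + 2 * (r:ℂ) * (starRingEnd ℂ a) * A v u) * Complex.I_sq
    have hre := (Complex.le_def.mp hval).1
    simp only [Complex.zero_re, Complex.mul_re, Complex.ofReal_re, Complex.ofReal_im,
      Complex.sub_re, Complex.sub_im, Complex.add_re, Complex.add_im, zero_mul, sub_zero,
      Complex.zero_le_real] at hre
    have h4r : (0:ℝ) < 4 * r^2 := by positivity
    have hX : 0 ≤ (A p p).re + (A q q).re + (A u u).re + (A v v).re - 2*r := by
      by_contra hc
      push_neg at hc
      nlinarith
    linarith

/-- If a 6×6 Hermitian matrix A is weakly positive, then for all pairs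
(j,k) ≠ (l,m) with j < k, l < m on the anti-diagonal (j + k = l + m = 7,
1-indexed; i.e. = 5 with 0-indexing), the anti-diagonal entry satisfies
|a_{j,k}| ≤ (a_{j,j} + a_{k,k} + a_{l,l} + a_{m,m})/2. -/
theorem weaklyPositive_antiDiag_bound (A : Matrix (Fin 6) (Fin 6) ℂ)
    (hA : A.IsHermitian) (hwp : WeaklyPositive A)
    (j k l m : Fin 6) (hjk : j < k) (hlm : l < m)
    (h1 : (j : ℕ) + (k : ℕ) = 5) (h2 : (l : ℕ) + (m : ℕ) = 5)
    (hne : (j, k) ≠ (l, m)) :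
    ‖A j k‖ ≤
      ((A j j).re + (A k k).re + (A l l).re + (A m m).re) / 2 := by
  have cases_of : ∀ p q : Fin 6, p < q → (p:ℕ) + (q:ℕ) = 5 →
      (p = 0 ∧ q = 5) ∨ (p = 1 ∧ q = 4) ∨ (p = 2 ∧ q = 3) := by
    intro p q hpq h
    have hp := p.isLt
    have hq := q.isLt
    have hlt : (p:ℕ) < (q:ℕ) := hpq
    rcases (show ((p:ℕ) = 0 ∧ (q:ℕ) = 5) ∨ ((p:ℕ) = 1 ∧ (q:ℕ) = 4) ∨
        ((p:ℕ) = 2 ∧ (q:ℕ) = 3) by omega) with ⟨a,b⟩|⟨a,b⟩|⟨a,b⟩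
    · exact Or.inl ⟨Fin.ext a, Fin.ext b⟩
    · exact Or.inr (Or.inl ⟨Fin.ext a, Fin.ext b⟩)
    · exact Or.inr (Or.inr ⟨Fin.ext a, Fin.ext b⟩)
  rcases cases_of j k hjk h1 with ⟨hj, hk⟩|⟨hj, hk⟩|⟨hj, hk⟩ <;>
    rcases cases_of l m hlm h2 with ⟨hl, hm⟩|⟨hl, hm⟩|⟨hl, hm⟩ <;>
    subst hj <;> subst hk <;> subst hl <;> subst hm <;>
    first
      | (exact absurd rfl hne)
      | (apply key_s6 A hA hwp <;>
          (try intro α β γ δ h) <;>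
          simp (config := { decide := true }) only [PluckerQuadric, Set.mem_setOf_eq, zq,
            Pi.add_apply, Pi.single_apply, if_true, if_false] <;>
          linear_combination h)
end

section
/- Let A = (a_{j,k}) be a weakly positive 6×6 Hermitian complex matrix. Then every off-diagonal entry satisfies |a_{j,k}| ≤ (trace A)/2 for all j ≠ k. -/
open Matrix
open scoped ComplexOrder

lemma qf_single (A : Matrix (Fin 6) (Fin 6) ℂ) (i i' : Fin 6) (x y : ℂ) :
    star (Pi.single i x) ⬝ᵥ A.mulVec (Pi.single i' y) =
      (starRingEnd ℂ) x * (A i i' * y) := by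
  rw [← Pi.single_star, Matrix.mulVec_single, single_dotProduct]
  rfl

lemma diag_nonneg (A : Matrix (Fin 6) (Fin 6) ℂ) (hwp : WeaklyPositive A) (i : Fin 6) :
    0 ≤ (A i i).re := by
  have hmem : (Pi.single i 1 : Fin 6 → ℂ) ∈ PluckerQuadric := by
    fin_cases i <;> simp [PluckerQuadric, Pi.single_apply]
  have h := hwp _ hmem
  rw [qf_single] at h
  simpa using (Complex.le_def.mp h).1

lemma qf_expand4 (A : Matrix (Fin 6) (Fin 6) ℂ) (j p q k : Fin 6) (x u v y : ℂ) :
    star (Pi.single j x + Pi.single p u + Pi.single q v + Pi.single k y : Fin 6 → ℂ) ⬝ᵥ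
      A.mulVec (Pi.single j x + Pi.single p u + Pi.single q v + Pi.single k y) =
      (starRingEnd ℂ) x * (A j j * x) + (starRingEnd ℂ) x * (A j p * u) +
      (starRingEnd ℂ) x * (A j q * v) + (starRingEnd ℂ) x * (A j k * y) +
      ((starRingEnd ℂ) u * (A p j * x) + (starRingEnd ℂ) u * (A p p * u) +
      (starRingEnd ℂ) u * (A p q * v) + (starRingEnd ℂ) u * (A p k * y)) +
      ((starRingEnd ℂ) v * (A q j * x) + (starRingEnd ℂ) v * (A q p * u) +
      (starRingEnd ℂ) v * (A q q * v) + (starRingEnd ℂ) v * (A q k * y)) +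
      ((starRingEnd ℂ) y * (A k j * x) + (starRingEnd ℂ) y * (A k p * u) +
      (starRingEnd ℂ) y * (A k q * v) + (starRingEnd ℂ) y * (A k k * y)) := by
  simp only [star_add, Matrix.mulVec_add, dotProduct_add, add_dotProduct, qf_single]
  ring

lemma dualpair (A : Matrix (Fin 6) (Fin 6) ℂ) (hA : A.IsHermitian)
    (hwp : WeaklyPositive A) (j p q k : Fin 6)
    (hmem : ∀ x u v y : ℂ, x * y + u * v = 0 →
      (Pi.single j x + Pi.single p u + Pi.single q v + Pi.single k y : Fin 6 → ℂ) ∈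
        PluckerQuadric)
    (hsum : (A j j).re + (A p p).re + (A q q).re + (A k k).re ≤ A.trace.re) :
    ‖A j k‖ ≤ A.trace.re / 2 := by
  have hjj := diag_nonneg A hwp j
  have hpp := diag_nonneg A hwp p
  have hqq := diag_nonneg A hwp q
  have hkk := diag_nonneg A hwp k
  set d := A j k with hd
  by_cases h0 : d = 0
  · rw [h0]; simp; linarith
  · set r : ℝ := ‖d‖ with hr
    have hr0 : 0 < r := by simpa [hr] using norm_pos_iff.mpr h0
    have hdd : (starRingEnd ℂ) d * d = (r : ℂ) * r := by
      have h1 : Complex.normSq d = r * r := by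
        rw [hr, Complex.normSq_eq_norm_sq]; ring
      calc (starRingEnd ℂ) d * d = d * (starRingEnd ℂ) d := mul_comm _ _
        _ = (Complex.normSq d : ℂ) := Complex.mul_conj d
        _ = (r : ℂ) * r := by rw [h1]; push_cast; ring
    have hkj : A k j = (starRingEnd ℂ) d := by rw [hd, ← hA.apply k j]; rfl
    set a : ℂ := Complex.exp ((d.arg / 2 : ℝ) * Complex.I) with ha
    have habs : ‖a‖ = 1 := Complex.norm_exp_ofReal_mul_I _
    have ha1 : (starRingEnd ℂ) a * a = 1 := by
      have hn : Complex.normSq a = 1 := by rw [Complex.normSq_eq_norm_sq, habs]; norm_num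
      calc (starRingEnd ℂ) a * a = a * (starRingEnd ℂ) a := mul_comm _ _
        _ = (Complex.normSq a : ℂ) := Complex.mul_conj a
        _ = 1 := by rw [hn]; norm_num
    have haa : (r : ℂ) * (a * a) = d := by
      rw [ha, ← Complex.exp_add]
      have h2 : ((d.arg / 2 : ℝ) : ℂ) * Complex.I + ((d.arg / 2 : ℝ) : ℂ) * Complex.I =
          (d.arg : ℂ) * Complex.I := by push_cast; ring
      rw [h2, hr]
      exact Complex.norm_mul_exp_arg_mul_I d
    have ha2 : (r : ℂ) * ((starRingEnd ℂ) a * (starRingEnd ℂ) a) = (starRingEnd ℂ) d := by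
      have := congrArg (starRingEnd ℂ) haa
      simpa [_root_.map_mul, Complex.conj_ofReal] using this
    have hm1 := hwp _ (hmem a 1 1 (-(starRingEnd ℂ) a) (by linear_combination -ha1))
    have hm2 := hwp _ (hmem a (-1) (-1) (-(starRingEnd ℂ) a) (by linear_combination -ha1))
    have hm3 := hwp _ (hmem a Complex.I (-Complex.I) (-(starRingEnd ℂ) a)
      (by linear_combination -ha1 - Complex.I_mul_I))
    have hm4 := hwp _ (hmem a (-Complex.I) Complex.I (-(starRingEnd ℂ) a)
      (by linear_combination -ha1 - Complex.I_mul_I))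
    have hS := add_nonneg (add_nonneg (add_nonneg hm1 hm2) hm3) hm4
    have key :
        (star (Pi.single j a + Pi.single p 1 + Pi.single q 1 +
            Pi.single k (-(starRingEnd ℂ) a) : Fin 6 → ℂ) ⬝ᵥ
          A.mulVec (Pi.single j a + Pi.single p 1 + Pi.single q 1 +
            Pi.single k (-(starRingEnd ℂ) a))) +
        (star (Pi.single j a + Pi.single p (-1) + Pi.single q (-1) +
            Pi.single k (-(starRingEnd ℂ) a) : Fin 6 → ℂ) ⬝ᵥ
          A.mulVec (Pi.single j a + Pi.single p (-1) + Pi.single q (-1) +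
            Pi.single k (-(starRingEnd ℂ) a))) +
        (star (Pi.single j a + Pi.single p Complex.I + Pi.single q (-Complex.I) +
            Pi.single k (-(starRingEnd ℂ) a) : Fin 6 → ℂ) ⬝ᵥ
          A.mulVec (Pi.single j a + Pi.single p Complex.I + Pi.single q (-Complex.I) +
            Pi.single k (-(starRingEnd ℂ) a))) +
        (star (Pi.single j a + Pi.single p (-Complex.I) + Pi.single q Complex.I +
            Pi.single k (-(starRingEnd ℂ) a) : Fin 6 → ℂ) ⬝ᵥ
          A.mulVec (Pi.single j a + Pi.single p (-Complex.I) + Pi.single q Complex.I +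
            Pi.single k (-(starRingEnd ℂ) a))) =
        4 * (A j j + A p p + A q q + A k k) - 8 * (r : ℂ) := by
      have hr' : (r : ℂ) ≠ 0 := by
        exact_mod_cast hr0.ne'
      apply mul_left_cancel₀ hr'
      simp only [qf_expand4, hkj, _root_.map_one, map_neg, Complex.conj_I, Complex.conj_conj]
      linear_combination (4*(r:ℂ)*(A j j + A k k))*ha1 +
        (2*(r:ℂ)*(A p q + A q p - A p p - A q q))*Complex.I_mul_I + (-4*d)*ha2 +
        (-4*(starRingEnd ℂ) d)*haa + (-8:ℂ)*hdd
    rw [key] at hS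
    have hre := (Complex.le_def.mp hS).1
    have hre2 : (4 * (A j j + A p p + A q q + A k k) - 8 * (r : ℂ)).re =
        4 * ((A j j).re + (A p p).re + (A q q).re + (A k k).re) - 8 * r := by
      simp [Complex.sub_re, Complex.add_re]
    rw [hre2] at hre
    simp only [Complex.zero_re] at hre
    linarith

lemma qf_expand2 (A : Matrix (Fin 6) (Fin 6) ℂ) (j k : Fin 6) (x y : ℂ) :
    star (Pi.single j x + Pi.single k y : Fin 6 → ℂ) ⬝ᵥ
      A.mulVec (Pi.single j x + Pi.single k y) =
      (starRingEnd ℂ) x * (A j j * x) + (starRingEnd ℂ) x * (A j k * y) +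
      (starRingEnd ℂ) y * (A k j * x) + (starRingEnd ℂ) y * (A k k * y) := by
  simp only [star_add, Matrix.mulVec_add, dotProduct_add, add_dotProduct, qf_single]
  ring

lemma nondual (A : Matrix (Fin 6) (Fin 6) ℂ) (hA : A.IsHermitian)
    (hwp : WeaklyPositive A) (j k : Fin 6)
    (hmem : ∀ x y : ℂ, (Pi.single j x + Pi.single k y : Fin 6 → ℂ) ∈ PluckerQuadric)
    (hsum : (A j j).re + (A k k).re ≤ A.trace.re) :
    ‖A j k‖ ≤ A.trace.re / 2 := by
  have hjj := diag_nonneg A hwp j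
  have hkk := diag_nonneg A hwp k
  set d := A j k with hd
  by_cases h0 : d = 0
  · rw [h0]; simp; linarith
  · set r : ℝ := ‖d‖ with hr
    have hr0 : 0 < r := by simpa [hr] using norm_pos_iff.mpr h0
    have hdd : (starRingEnd ℂ) d * d = (r : ℂ) * r := by
      have h1 : Complex.normSq d = r * r := by
        rw [hr, Complex.normSq_eq_norm_sq]; ring
      calc (starRingEnd ℂ) d * d = d * (starRingEnd ℂ) d := mul_comm _ _
        _ = (Complex.normSq d : ℂ) := Complex.mul_conj d
        _ = (r : ℂ) * r := by rw [h1]; push_cast; ring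
    have hkj : A k j = (starRingEnd ℂ) d := by rw [hd, ← hA.apply k j]; rfl
    have h := hwp _ (hmem (r : ℂ) (-(starRingEnd ℂ) d))
    rw [qf_expand2, hkj] at h
    have key : (starRingEnd ℂ) (r : ℂ) * (A j j * (r : ℂ)) +
        (starRingEnd ℂ) (r : ℂ) * (d * -(starRingEnd ℂ) d) +
        (starRingEnd ℂ) (-(starRingEnd ℂ) d) * ((starRingEnd ℂ) d * (r : ℂ)) +
        (starRingEnd ℂ) (-(starRingEnd ℂ) d) * (A k k * -(starRingEnd ℂ) d) =
        (r : ℂ) * (r : ℂ) * (A j j + A k k) - 2 * ((r : ℂ) * (r : ℂ) * (r : ℂ)) := by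
      simp only [map_neg, Complex.conj_ofReal, Complex.conj_conj]
      linear_combination (A k k - 2 * (r : ℂ)) * hdd
    rw [key] at h
    have hre := (Complex.le_def.mp h).1
    have : ((r : ℂ) * (r : ℂ) * (A j j + A k k) - 2 * ((r : ℂ) * (r : ℂ) * (r : ℂ))).re =
        r * r * ((A j j).re + (A k k).re) - 2 * (r * r * r) := by
      simp [Complex.sub_re, Complex.add_re]
    rw [this] at hre
    simp only [Complex.zero_re] at hre
    have h2 : 2 * r ≤ (A j j).re + (A k k).re := by
      nlinarith [mul_pos hr0 hr0]
    linarith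


lemma trace_re_eq (A : Matrix (Fin 6) (Fin 6) ℂ) :
    A.trace.re = ∑ i, (A i i).re := by
  simp [Matrix.trace, Matrix.diag, Complex.re_sum]

lemma diagsum2 (A : Matrix (Fin 6) (Fin 6) ℂ) (hwp : WeaklyPositive A)
    (j k : Fin 6) (hjk : j ≠ k) : (A j j).re + (A k k).re ≤ A.trace.re := by
  rw [trace_re_eq]
  calc (A j j).re + (A k k).re = ∑ i ∈ ({j, k} : Finset (Fin 6)), (A i i).re := by
        rw [Finset.sum_insert (by simpa using hjk), Finset.sum_singleton]
    _ ≤ ∑ i, (A i i).re :=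
        Finset.sum_le_sum_of_subset_of_nonneg (Finset.subset_univ _)
          (fun i _ _ => diag_nonneg A hwp i)

lemma diagsum4 (A : Matrix (Fin 6) (Fin 6) ℂ) (hwp : WeaklyPositive A)
    (j p q k : Fin 6) (h1 : j ≠ p) (h2 : j ≠ q) (h3 : j ≠ k) (h4 : p ≠ q)
    (h5 : p ≠ k) (h6 : q ≠ k) :
    (A j j).re + (A p p).re + (A q q).re + (A k k).re ≤ A.trace.re := by
  rw [trace_re_eq]
  calc (A j j).re + (A p p).re + (A q q).re + (A k k).re
      = ∑ i ∈ ({j, p, q, k} : Finset (Fin 6)), (A i i).re := by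
        rw [Finset.sum_insert (by simp [h1, h2, h3]),
          Finset.sum_insert (by simp [h4, h5]),
          Finset.sum_insert (by simpa using h6), Finset.sum_singleton]
        ring
    _ ≤ ∑ i, (A i i).re :=
        Finset.sum_le_sum_of_subset_of_nonneg (Finset.subset_univ _)
          (fun i _ _ => diag_nonneg A hwp i)

set_option maxHeartbeats 1000000 in
/-- If a 6×6 Hermitian matrix A is weakly positive, then every off-diagonal
entry satisfies |a_{j,k}| ≤ (trace A)/2. -/
theorem weaklyPositive_trace_bound (A : Matrix (Fin 6) (Fin 6) ℂ)
    (hA : A.IsHermitian) (hwp : WeaklyPositive A) :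
    ∀ j k : Fin 6, j ≠ k → ‖A j k‖ ≤ (A.trace).re / 2 := by
  intro j k hjk
  fin_cases j <;> fin_cases k
  · exact absurd rfl hjk
  · exact nondual A hA hwp _ _
        (by intro x y
            simp [PluckerQuadric, Pi.single_apply])
        (diagsum2 A hwp _ _ (by decide))
  · exact nondual A hA hwp _ _
        (by intro x y
            simp [PluckerQuadric, Pi.single_apply])
        (diagsum2 A hwp _ _ (by decide))
  · exact nondual A hA hwp _ _
        (by intro x y
            simp [PluckerQuadric, Pi.single_apply])
        (diagsum2 A hwp _ _ (by decide))
  · exact nondual A hA hwp _ _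
        (by intro x y
            simp [PluckerQuadric, Pi.single_apply])
        (diagsum2 A hwp _ _ (by decide))
  · exact dualpair A hA hwp 0 1 4 5
        (by intro x u v y h
            simp [PluckerQuadric, Pi.single_apply]
            linear_combination h)
        (diagsum4 A hwp 0 1 4 5 (by decide) (by decide) (by decide)
          (by decide) (by decide) (by decide))
  · exact nondual A hA hwp _ _
        (by intro x y
            simp [PluckerQuadric, Pi.single_apply])
        (diagsum2 A hwp _ _ (by decide))
  · exact absurd rfl hjk
  · exact nondual A hA hwp _ _
        (by intro x y
            simp [PluckerQuadric, Pi.single_apply])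
        (diagsum2 A hwp _ _ (by decide))
  · exact nondual A hA hwp _ _
        (by intro x y
            simp [PluckerQuadric, Pi.single_apply])
        (diagsum2 A hwp _ _ (by decide))
  · exact dualpair A hA hwp 1 0 5 4
        (by intro x u v y h
            simp [PluckerQuadric, Pi.single_apply]
            linear_combination h)
        (diagsum4 A hwp 1 0 5 4 (by decide) (by decide) (by decide)
          (by decide) (by decide) (by decide))
  · exact nondual A hA hwp _ _
        (by intro x y
            simp [PluckerQuadric, Pi.single_apply])
        (diagsum2 A hwp _ _ (by decide))
  · exact nondual A hA hwp _ _
        (by intro x y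
            simp [PluckerQuadric, Pi.single_apply])
        (diagsum2 A hwp _ _ (by decide))
  · exact nondual A hA hwp _ _
        (by intro x y
            simp [PluckerQuadric, Pi.single_apply])
        (diagsum2 A hwp _ _ (by decide))
  · exact absurd rfl hjk
  · exact dualpair A hA hwp 2 0 5 3
        (by intro x u v y h
            simp [PluckerQuadric, Pi.single_apply]
            linear_combination h)
        (diagsum4 A hwp 2 0 5 3 (by decide) (by decide) (by decide)
          (by decide) (by decide) (by decide))
  · exact nondual A hA hwp _ _
        (by intro x y
            simp [PluckerQuadric, Pi.single_apply])
        (diagsum2 A hwp _ _ (by decide))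
  · exact nondual A hA hwp _ _
        (by intro x y
            simp [PluckerQuadric, Pi.single_apply])
        (diagsum2 A hwp _ _ (by decide))
  · exact nondual A hA hwp _ _
        (by intro x y
            simp [PluckerQuadric, Pi.single_apply])
        (diagsum2 A hwp _ _ (by decide))
  · exact nondual A hA hwp _ _
        (by intro x y
            simp [PluckerQuadric, Pi.single_apply])
        (diagsum2 A hwp _ _ (by decide))
  · exact dualpair A hA hwp 3 0 5 2
        (by intro x u v y h
            simp [PluckerQuadric, Pi.single_apply]
            linear_combination h)
        (diagsum4 A hwp 3 0 5 2 (by decide) (by decide) (by decide)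
          (by decide) (by decide) (by decide))
  · exact absurd rfl hjk
  · exact nondual A hA hwp _ _
        (by intro x y
            simp [PluckerQuadric, Pi.single_apply])
        (diagsum2 A hwp _ _ (by decide))
  · exact nondual A hA hwp _ _
        (by intro x y
            simp [PluckerQuadric, Pi.single_apply])
        (diagsum2 A hwp _ _ (by decide))
  · exact nondual A hA hwp _ _
        (by intro x y
            simp [PluckerQuadric, Pi.single_apply])
        (diagsum2 A hwp _ _ (by decide))
  · exact dualpair A hA hwp 4 0 5 1
        (by intro x u v y h
            simp [PluckerQuadric, Pi.single_apply]
            linear_combination h)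
        (diagsum4 A hwp 4 0 5 1 (by decide) (by decide) (by decide)
          (by decide) (by decide) (by decide))
  · exact nondual A hA hwp _ _
        (by intro x y
            simp [PluckerQuadric, Pi.single_apply])
        (diagsum2 A hwp _ _ (by decide))
  · exact nondual A hA hwp _ _
        (by intro x y
            simp [PluckerQuadric, Pi.single_apply])
        (diagsum2 A hwp _ _ (by decide))
  · exact absurd rfl hjk
  · exact nondual A hA hwp _ _
        (by intro x y
            simp [PluckerQuadric, Pi.single_apply])
        (diagsum2 A hwp _ _ (by decide))
  · exact dualpair A hA hwp 5 1 4 0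
        (by intro x u v y h
            simp [PluckerQuadric, Pi.single_apply]
            linear_combination h)
        (diagsum4 A hwp 5 1 4 0 (by decide) (by decide) (by decide)
          (by decide) (by decide) (by decide))
  · exact nondual A hA hwp _ _
        (by intro x y
            simp [PluckerQuadric, Pi.single_apply])
        (diagsum2 A hwp _ _ (by decide))
  · exact nondual A hA hwp _ _
        (by intro x y
            simp [PluckerQuadric, Pi.single_apply])
        (diagsum2 A hwp _ _ (by decide))
  · exact nondual A hA hwp _ _
        (by intro x y
            simp [PluckerQuadric, Pi.single_apply])
        (diagsum2 A hwp _ _ (by decide))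
  · exact nondual A hA hwp _ _
        (by intro x y
            simp [PluckerQuadric, Pi.single_apply])
        (diagsum2 A hwp _ _ (by decide))
  · exact absurd rfl hjk
end

section
/- Fix indices j < k in {1,…,6} with j + k ≠ 7 and a ∈ ℂ, and let A_a be the 6×6 Hermitian matrix equal to the identity matrix except that its (j,k) entry is a and its (k,j) entry is ā. Then A_a is weakly positive if and only if |a| ≤ 1. -/
open Matrix
open scoped ComplexOrder

lemma Q_eval_s10 (j k : Fin 6) (a : ℂ) (z : Fin 6 → ℂ) :
    star z ⬝ᵥ (Amat j k a).mulVec z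
      = (((∑ i, Complex.normSq (z i))
          + 2 * (a * (starRingEnd ℂ) (z j) * z k).re : ℝ) : ℂ) := by
  have h1 : Function.update (0 : Fin 6 → ℂ) j (a * z k) = Pi.single j (a * z k) := rfl
  have h2 : Function.update (0 : Fin 6 → ℂ) k ((starRingEnd ℂ) a * z j)
      = Pi.single k ((starRingEnd ℂ) a * z j) := rfl
  rw [Amat, add_mulVec, add_mulVec, one_mulVec, single_mulVec,
    single_mulVec, h1, h2, dotProduct_add, dotProduct_add,
    dotProduct_single, dotProduct_single]
  have hs : star z ⬝ᵥ z = ((∑ i, Complex.normSq (z i) : ℝ) : ℂ) := by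
    simp only [dotProduct, Pi.star_apply, Complex.ofReal_sum]
    refine Finset.sum_congr rfl fun i _ => ?_
    rw [RCLike.star_def, mul_comm, Complex.mul_conj]
  rw [hs]
  have hw : star z j * (a * z k) + star z k * ((starRingEnd ℂ) a * z j)
      = ((2 * (a * (starRingEnd ℂ) (z j) * z k).re : ℝ) : ℂ) := by
    rw [← Complex.add_conj]
    simp only [Pi.star_apply, RCLike.star_def, _root_.map_mul, Complex.conj_conj]
    ring
  rw [add_assoc, hw]
  push_cast
  ring

/-- For j < k with j + k ≠ 7 (1-indexed; 0-indexed: j + k ≠ 5), the matrix A_a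
(identity except entries (j,k) = a and (k,j) = conj a) is weakly positive if
and only if |a| ≤ 1. -/
theorem Amat_weaklyPositive_iff (j k : Fin 6) (hjk : j < k)
    (h7 : (j : ℕ) + (k : ℕ) ≠ 5) (a : ℂ) :
    WeaklyPositive (Amat j k a) ↔ ‖a‖ ≤ 1 := by
  have hne : j ≠ k := ne_of_lt hjk
  constructor
  · intro h
    set z : Fin 6 → ℂ :=
      fun i => if i = j then 1 else if i = k then -((starRingEnd ℂ) a) else 0 with hzdef
    have hzj : z j = 1 := by simp [hzdef]
    have hzk : z k = -((starRingEnd ℂ) a) := by simp [hzdef, hne.symm]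
    have hz0 : ∀ x : Fin 6, x ≠ j → x ≠ k → z x = 0 := by
      intro x hx1 hx2; simp [hzdef, hx1, hx2]
    have hz : z ∈ PluckerQuadric := by
      have key : ∀ p q : Fin 6, (p : ℕ) + (q : ℕ) = 5 → z p * z q = 0 := by
        intro p q hpq
        by_cases hpj : p = j
        · subst hpj
          have hqj : q ≠ p := by
            intro hq; subst hq; omega
          have hqk : q ≠ k := by
            intro hq; subst hq; omega
          rw [hz0 q hqj hqk, mul_zero]
        · by_cases hpk : p = k
          · subst hpk
            have hqj : q ≠ j := by
              intro hq; subst hq; omega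
            have hqk : q ≠ p := by
              intro hq; subst hq; omega
            rw [hz0 q hqj hqk, mul_zero]
          · rw [hz0 p hpj hpk, zero_mul]
      have e1 := key 0 5 rfl
      have e2 := key 1 4 rfl
      have e3 := key 2 3 rfl
      simp only [PluckerQuadric, Set.mem_setOf_eq, e1, e2, e3, add_zero]
    have hq := h z hz
    rw [Q_eval_s10, Complex.zero_le_real] at hq
    have hsum : ∑ i, Complex.normSq (z i)
        = Complex.normSq (z j) + Complex.normSq (z k) := by
      have hp : ∑ x ∈ ({j, k} : Finset (Fin 6)), Complex.normSq (z x)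
          = Complex.normSq (z j) + Complex.normSq (z k) := Finset.sum_pair hne
      rw [← hp]
      exact (Finset.sum_subset (Finset.subset_univ _) (fun x _ hx => by
        simp only [Finset.mem_insert, Finset.mem_singleton, not_or] at hx
        rw [hz0 x hx.1 hx.2, Complex.normSq_zero])).symm
    rw [hsum, hzj, hzk] at hq
    simp only [_root_.map_one, mul_one, Complex.normSq_one, Complex.normSq_neg,
      Complex.normSq_conj, mul_neg, Complex.neg_re, Complex.mul_conj] at hq
    rw [Complex.normSq_eq_norm_sq] at hq
    rw [Complex.ofReal_re] at hq
    nlinarith [norm_nonneg a]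
  · intro ha z hz
    rw [Q_eval_s10, Complex.zero_le_real]
    have h1 : Complex.normSq (z j) + Complex.normSq (z k)
        ≤ ∑ i, Complex.normSq (z i) := by
      have hp : ∑ x ∈ ({j, k} : Finset (Fin 6)), Complex.normSq (z x)
          = Complex.normSq (z j) + Complex.normSq (z k) := Finset.sum_pair hne
      rw [← hp]
      exact Finset.sum_le_sum_of_subset_of_nonneg (Finset.subset_univ _)
        (fun i _ _ => Complex.normSq_nonneg _)
    have h2 : |(a * (starRingEnd ℂ) (z j) * z k).re|
        ≤ ‖z j‖ * ‖z k‖ := by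
      calc |(a * (starRingEnd ℂ) (z j) * z k).re|
          ≤ ‖a * (starRingEnd ℂ) (z j) * z k‖ := Complex.abs_re_le_norm _
        _ = ‖a‖ * (‖z j‖ * ‖z k‖) := by
            rw [norm_mul, norm_mul, Complex.norm_conj]; ring
        _ ≤ 1 * (‖z j‖ * ‖z k‖) := by
            apply mul_le_mul_of_nonneg_right ha
            positivity
        _ = ‖z j‖ * ‖z k‖ := one_mul _
    have e1 : Complex.normSq (z j) = (‖z j‖) ^ 2 := Complex.normSq_eq_norm_sq _
    have e2 : Complex.normSq (z k) = (‖z k‖) ^ 2 := Complex.normSq_eq_norm_sq _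
    have h3 := abs_le.mp h2
    nlinarith [sq_nonneg (‖z j‖ - ‖z k‖)]
end

section
/- Fix indices j < k in {1,…,6} with j + k ≠ 7 and a ∈ ℂ, and let A_a be the 6×6 Hermitian matrix equal to the identity matrix except that its (j,k) entry is a and its (k,j) entry is ā. Then A_a is strictly weakly positive if and only if |a| < 1. -/
open Matrix
open scoped ComplexOrder

lemma Amat_quadForm (j k : Fin 6) (a : ℂ) (z : Fin 6 → ℂ) :
    star z ⬝ᵥ (Amat j k a).mulVec z =
      (∑ i, (starRingEnd ℂ) (z i) * z i) + (starRingEnd ℂ) (z j) * (a * z k)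
        + (starRingEnd ℂ) (z k) * ((starRingEnd ℂ) a * z j) := by
  have h1 : Function.update (0 : Fin 6 → ℂ) j (a * z k) = Pi.single j (a * z k) := rfl
  have h2 : Function.update (0 : Fin 6 → ℂ) k ((starRingEnd ℂ) a * z j)
      = Pi.single k ((starRingEnd ℂ) a * z j) := rfl
  simp only [Amat, add_mulVec, one_mulVec, dotProduct_add, single_mulVec, h1, h2,
    dotProduct_single]
  simp only [dotProduct, Pi.star_apply, RCLike.star_def]

/-- For j < k with j + k ≠ 7 (1-indexed; 0-indexed: j + k ≠ 5), the matrix A_a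
(identity except entries (j,k) = a and (k,j) = conj a) is strictly weakly
positive if and only if |a| < 1. -/
theorem Amat_strictlyWeaklyPositive_iff (j k : Fin 6) (hjk : j < k)
    (h7 : (j : ℕ) + (k : ℕ) ≠ 5) (a : ℂ) :
    StrictlyWeaklyPositive (Amat j k a) ↔ ‖a‖ < 1 := by
  have hne : j ≠ k := ne_of_lt hjk
  constructor
  · intro h
    set z : Fin 6 → ℂ := fun i => if i = j then 1 else if i = k then -(starRingEnd ℂ) a else 0
      with hzdef
    have key : ∀ p q : Fin 6, (p : ℕ) + (q : ℕ) = 5 → z p * z q = 0 := by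
      intro p q hpq
      rcases eq_or_ne p j with rfl | hpj
      · have hqj : q ≠ p := by intro hq; subst hq; omega
        have hqk : q ≠ k := by intro hq; subst hq; exact h7 hpq
        simp [hzdef, hqj, hqk]
      · rcases eq_or_ne p k with rfl | hpk
        · have hqj : q ≠ j := by intro hq; subst hq; exact h7 (by omega)
          have hqk : q ≠ p := by intro hq; subst hq; omega
          simp [hzdef, hqj, hqk]
        · simp [hzdef, hpj, hpk]
    have hq : z ∈ PluckerQuadric := by
      show z 0 * z 5 + z 1 * z 4 + z 2 * z 3 = 0
      rw [key 0 5 (by decide), key 1 4 (by decide), key 2 3 (by decide)]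
      ring
    have hz0 : z ≠ 0 := by
      intro h0
      have := congrFun h0 j
      simp [hzdef] at this
    have H := h z hq hz0
    rw [Amat_quadForm] at H
    have hzj : z j = 1 := by simp [hzdef]
    have hzk : z k = -(starRingEnd ℂ) a := by simp [hzdef, hne.symm]
    have hsum : (∑ i, (starRingEnd ℂ) (z i) * z i) = 1 + a * (starRingEnd ℂ) a := by
      have e : ∀ i : Fin 6, (starRingEnd ℂ) (z i) * z i
          = (if i = j then (1 : ℂ) else 0) + (if i = k then a * (starRingEnd ℂ) a else 0) := by
        intro i
        rcases eq_or_ne i j with rfl | h1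
        · simp [hzdef, hne]
        · rcases eq_or_ne i k with rfl | h2
          · simp only [hzdef, if_neg h1, if_pos rfl, if_neg (hne.symm ∘ Eq.symm)]
            simp [map_neg, Complex.conj_conj]
          · simp [hzdef, h1, h2]
      rw [Finset.sum_congr rfl fun i _ => e i, Finset.sum_add_distrib,
        Finset.sum_ite_eq' Finset.univ j (fun _ => (1 : ℂ)),
        Finset.sum_ite_eq' Finset.univ k (fun _ => a * (starRingEnd ℂ) a)]
      simp
    rw [hsum, hzj, hzk] at H
    have H2 : (0 : ℂ) < 1 - a * (starRingEnd ℂ) a := by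
      have : 1 + a * (starRingEnd ℂ) a + (starRingEnd ℂ) (1 : ℂ) * (a * -(starRingEnd ℂ) a)
          + (starRingEnd ℂ) (-(starRingEnd ℂ) a) * ((starRingEnd ℂ) a * 1)
          = 1 - a * (starRingEnd ℂ) a := by
        simp [map_neg, Complex.conj_conj]
        ring
      rwa [this] at H
    rw [Complex.mul_conj] at H2
    have H3 : (0 : ℝ) < 1 - Complex.normSq a := by
      have : (1 : ℂ) - (Complex.normSq a : ℂ) = ((1 - Complex.normSq a : ℝ) : ℂ) := by push_cast; ring
      rw [this] at H2
      exact Complex.zero_lt_real.mp H2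
    have hsq := Complex.sq_norm a
    nlinarith [norm_nonneg a]
  · intro ha z _ hz0
    rw [Amat_quadForm]
    set t := (starRingEnd ℂ) (z j) * (a * z k) with ht
    have hconj : (starRingEnd ℂ) (z k) * ((starRingEnd ℂ) a * z j) = (starRingEnd ℂ) t := by
      simp only [ht, _root_.map_mul, Complex.conj_conj]
      ring
    have hsum : (∑ i, (starRingEnd ℂ) (z i) * z i) = ((∑ i, Complex.normSq (z i) : ℝ) : ℂ) := by
      push_cast
      exact Finset.sum_congr rfl fun i _ => Complex.normSq_eq_conj_mul_self.symm
    rw [hconj, hsum]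
    have hform : ((∑ i, Complex.normSq (z i) : ℝ) : ℂ) + t + (starRingEnd ℂ) t
        = (((∑ i, Complex.normSq (z i)) + 2 * t.re : ℝ) : ℂ) := by
      rw [add_assoc, Complex.add_conj]
      push_cast
      ring
    rw [hform]
    refine Complex.zero_lt_real.mpr ?_
    -- real estimates
    obtain ⟨i0, hi0⟩ := Function.ne_iff.mp hz0
    have hSpos : 0 < ∑ i, Complex.normSq (z i) :=
      Finset.sum_pos' (fun i _ => Complex.normSq_nonneg _)
        ⟨i0, Finset.mem_univ i0, Complex.normSq_pos.mpr hi0⟩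
    have hS2 : Complex.normSq (z j) + Complex.normSq (z k) ≤ ∑ i, Complex.normSq (z i) := by
      have h := Finset.sum_le_sum_of_subset_of_nonneg (Finset.subset_univ ({j, k} : Finset (Fin 6)))
        (fun i _ _ => Complex.normSq_nonneg (z i))
      rwa [Finset.sum_pair hne] at h
    have htre : -(‖t‖) ≤ t.re := (abs_le.mp (Complex.abs_re_le_norm t)).1
    have habs_t : ‖t‖ = ‖z j‖ * (‖a‖ * ‖z k‖) := by
      simp [ht, _root_.map_mul]
    have hx2 : ‖z j‖ ^ 2 = Complex.normSq (z j) := Complex.sq_norm _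
    have hy2 : ‖z k‖ ^ 2 = Complex.normSq (z k) := Complex.sq_norm _
    have hA := mul_nonneg (norm_nonneg a) (sq_nonneg (‖z j‖ - ‖z k‖))
    have hB := mul_le_mul_of_nonneg_left hS2 (norm_nonneg a)
    have hC := mul_lt_mul_of_pos_right ha hSpos
    nlinarith [norm_nonneg a, norm_nonneg (z j), norm_nonneg (z k)]
end

section
/- Fix indices j < k in {1,…,6} with j + k ≠ 7 and a ∈ ℂ, and let A_a be the 6×6 Hermitian matrix equal to the identity matrix except that its (j,k) entry is a and its (k,j) entry is ā. Then A_a is strongly positive if and only if |a| ≤ 1. -/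
open Matrix
open scoped ComplexOrder

lemma single_mem_pl (m : Fin 6) (c : ℂ) : Pi.single m c ∈ PluckerQuadric := by
  fin_cases m <;> simp [PluckerQuadric, Pi.single_apply]

lemma support_mem_pl (j k : Fin 6) (h : (j:ℕ) + (k:ℕ) ≠ 5) (z : Fin 6 → ℂ)
    (hz : ∀ p, p ≠ j → p ≠ k → z p = 0) : z ∈ PluckerQuadric := by
  have key : ∀ p q : Fin 6, (p:ℕ) + (q:ℕ) = 5 → z p * z q = 0 := by
    intro p q hpq
    by_cases hp : z p = 0
    · simp [hp]
    by_cases hq : z q = 0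
    · simp [hq]
    exfalso
    have hp' : p = j ∨ p = k := by
      by_contra h'; push_neg at h'; exact hp (hz p h'.1 h'.2)
    have hq' : q = j ∨ q = k := by
      by_contra h'; push_neg at h'; exact hq (hz q h'.1 h'.2)
    rcases hp' with rfl | rfl <;> rcases hq' with rfl | rfl <;> omega
  have h1 := key 0 5 (by decide)
  have h2 := key 1 4 (by decide)
  have h3 := key 2 3 (by decide)
  simp [PluckerQuadric, h1, h2, h3]

lemma stdBasis_mulVec' (j k : Fin 6) (a : ℂ) (x : Fin 6 → ℂ) :
    (Matrix.single j k a).mulVec x = Pi.single j (a * x k) := by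
  ext i
  simp [single_mulVec, Function.update, Pi.single_apply, eq_comm]

lemma quad_form (j k : Fin 6) (a : ℂ) (x : Fin 6 → ℂ) :
    star x ⬝ᵥ (Amat j k a).mulVec x =
      star x ⬝ᵥ x + (starRingEnd ℂ) (x j) * (a * x k)
        + (starRingEnd ℂ) (x k) * ((starRingEnd ℂ) a * x j) := by
  simp only [Amat, add_mulVec, one_mulVec, dotProduct_add, stdBasis_mulVec',
    dotProduct_single]
  simp [dotProduct]

lemma vmv_mulVec (u x : Fin 6 → ℂ) :
    (vecMulVec u (star u)) *ᵥ x = (star u ⬝ᵥ x) • u := by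
  ext p
  simp only [vecMulVec, mulVec, dotProduct, Matrix.of_apply, Pi.smul_apply,
    smul_eq_mul, Pi.star_apply]
  rw [Finset.sum_mul]
  exact Finset.sum_congr rfl fun q _ => by ring

lemma sp_psd {A : Matrix (Fin 6) (Fin 6) ℂ} (h : StronglyPositive A) (x : Fin 6 → ℂ) :
    0 ≤ star x ⬝ᵥ A.mulVec x := by
  obtain ⟨n, v, -, rfl⟩ := h
  have h1 : (∑ i, vecMulVec (v i) (star (v i))) *ᵥ x
      = ∑ i, (vecMulVec (v i) (star (v i))) *ᵥ x := by
    ext l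
    simp only [mulVec, dotProduct, Finset.sum_apply, Matrix.sum_apply, Finset.sum_mul]
    rw [Finset.sum_comm]
  rw [h1]
  have h2 : star x ⬝ᵥ ∑ i, (vecMulVec (v i) (star (v i))) *ᵥ x
      = ∑ i, star x ⬝ᵥ (vecMulVec (v i) (star (v i))) *ᵥ x := by
    simp only [dotProduct, Finset.sum_apply, Finset.mul_sum]
    rw [Finset.sum_comm]
  rw [h2]
  apply Finset.sum_nonneg
  intro i _
  rw [vmv_mulVec, dotProduct_smul, star_dotProduct, smul_eq_mul]
  exact star_mul_self_nonneg _

/-- For j < k with j + k ≠ 7 (1-indexed; 0-indexed: j + k ≠ 5), the matrix A_a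
(identity except entries (j,k) = a and (k,j) = conj a) is strongly positive if
and only if |a| ≤ 1. -/
theorem Amat_stronglyPositive_iff (j k : Fin 6) (hjk : j < k)
    (h7 : (j : ℕ) + (k : ℕ) ≠ 5) (a : ℂ) :
    StronglyPositive (Amat j k a) ↔ ‖a‖ ≤ 1 := by
  have hne : j ≠ k := hjk.ne
  have hne' : k ≠ j := hjk.ne'
  constructor
  · intro hsp
    by_cases ha : a = 0
    · simp [ha]
    set r : ℝ := ‖a‖ with hr
    have hr0 : (0:ℝ) < r := norm_pos_iff.mpr ha
    have hrc : ((r:ℝ):ℂ) ≠ 0 := by exact_mod_cast hr0.ne'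
    have haa : a * (starRingEnd ℂ) a = ((r:ℝ):ℂ) * ((r:ℝ):ℂ) := by
      rw [Complex.mul_conj]
      norm_cast
      rw [← Complex.sq_norm]
      ring
    set b : ℂ := (starRingEnd ℂ) a / ((r:ℝ):ℂ) with hb
    set x : Fin 6 → ℂ := Pi.single j 1 + Pi.single k (-b) with hx
    have hxj : x j = 1 := by simp [hx, Pi.single_apply, hne']
    have hxk : x k = -b := by simp [hx, Pi.single_apply, hne]
    have hstar : star x = Pi.single j 1 + Pi.single k (-(starRingEnd ℂ) b) := by
      ext i
      rw [hx]
      simp only [Pi.star_apply, Pi.add_apply, Pi.single_apply]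
      split_ifs <;> simp
    have hdot : star x ⬝ᵥ x = 1 + (starRingEnd ℂ) b * b := by
      rw [hstar]
      simp only [add_dotProduct, single_dotProduct, hxj, hxk, one_mul]
      ring
    have hbb : (starRingEnd ℂ) b * b = 1 := by
      rw [hb, map_div₀, Complex.conj_conj, Complex.conj_ofReal]
      field_simp
      linear_combination haa
    have hab : a * b = ((r:ℝ):ℂ) := by
      rw [hb]
      field_simp
      linear_combination haa
    have hba : (starRingEnd ℂ) b * (starRingEnd ℂ) a = ((r:ℝ):ℂ) := by
      rw [hb, map_div₀, Complex.conj_conj, Complex.conj_ofReal]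
      field_simp
      linear_combination haa
    clear_value b
    have hQ : star x ⬝ᵥ (Amat j k a).mulVec x = ((2 - 2*r : ℝ) : ℂ) := by
      rw [quad_form, hdot, hxj, hxk]
      simp only [_root_.map_one, map_neg, one_mul, mul_one, mul_neg, neg_mul]
      push_cast
      linear_combination hbb - hab - hba
    have := sp_psd hsp x
    rw [hQ] at this
    have h2 : (0:ℝ) ≤ 2 - 2*r := by exact_mod_cast this
    linarith
  · intro hle
    set r : ℝ := ‖a‖ with hr
    have hr0 : (0:ℝ) ≤ r := norm_nonneg a
    set ω : ℂ := if a = 0 then 1 else a / ((r:ℝ):ℂ) with hω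
    set s : ℂ := ((Real.sqrt r : ℝ) : ℂ) with hs
    set t : ℂ := ((Real.sqrt (1-r) : ℝ) : ℂ) with ht
    have hsc : (starRingEnd ℂ) s = s := Complex.conj_ofReal _
    have htc : (starRingEnd ℂ) t = t := Complex.conj_ofReal _
    have hss : s * s = ((r:ℝ):ℂ) := by
      rw [hs]; norm_cast; exact Real.mul_self_sqrt hr0
    have htt : t * t = 1 - ((r:ℝ):ℂ) := by
      rw [ht, ← Complex.ofReal_mul, Real.mul_self_sqrt (by linarith : (0:ℝ) ≤ 1 - r)]
      push_cast; ring
    have hωa : ((r:ℝ):ℂ) * ω = a := by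
      by_cases ha : a = 0
      · simp [hω, ha, hr]
      · have hrc : ((r:ℝ):ℂ) ≠ 0 := by
          exact_mod_cast (norm_pos_iff.mpr ha).ne'
        rw [hω, if_neg ha]
        field_simp
    have haa : a * (starRingEnd ℂ) a = ((r:ℝ):ℂ) * ((r:ℝ):ℂ) := by
      rw [Complex.mul_conj]
      norm_cast
      rw [← Complex.sq_norm]
      ring
    have hωω : (starRingEnd ℂ) ω * ω = 1 := by
      by_cases ha : a = 0
      · simp [hω, ha]
      · have hrc : ((r:ℝ):ℂ) ≠ 0 := by
          exact_mod_cast (norm_pos_iff.mpr ha).ne'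
        rw [hω, if_neg ha]
        rw [map_div₀, Complex.conj_ofReal]
        field_simp
        linear_combination haa
    have hca : (starRingEnd ℂ) a = ((r:ℝ):ℂ) * (starRingEnd ℂ) ω := by
      rw [← hωa]; simp [Complex.conj_ofReal]
    -- the vectors
    set u : Fin 6 → ℂ := fun i => if i = j then s else if i = k then s * (starRingEnd ℂ) ω else 0 with hu
    set w : Fin 6 → Fin 6 → ℂ := fun m => Pi.single m (if m = j ∨ m = k then t else 1) with hw
    refine ⟨7, Fin.snoc w u, ?_, ?_⟩
    · intro m
      refine Fin.lastCases ?_ ?_ m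
      · rw [Fin.snoc_last]
        refine support_mem_pl j k h7 u ?_
        intro p hpj hpk
        simp [hu, hpj, hpk]
      · intro m
        rw [Fin.snoc_castSucc]
        exact single_mem_pl m _
    · -- matrix identity
      have p1 : s * (starRingEnd ℂ) s = ((r:ℝ):ℂ) := by rw [hsc, hss]
      have p2 : s * (starRingEnd ℂ) (s * (starRingEnd ℂ) ω) = a := by
        rw [_root_.map_mul, hsc, Complex.conj_conj, ← mul_assoc, hss, hωa]
      have p3 : s * (starRingEnd ℂ) ω * (starRingEnd ℂ) s = (starRingEnd ℂ) a := by
        rw [hsc]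
        calc s * (starRingEnd ℂ) ω * s = s * s * (starRingEnd ℂ) ω := by ring
        _ = ((r:ℝ):ℂ) * (starRingEnd ℂ) ω := by rw [hss]
        _ = (starRingEnd ℂ) a := hca.symm
      have p4 : s * (starRingEnd ℂ) ω * (starRingEnd ℂ) (s * (starRingEnd ℂ) ω)
          = ((r:ℝ):ℂ) := by
        rw [_root_.map_mul, hsc, Complex.conj_conj]
        calc s * (starRingEnd ℂ) ω * (s * ω) = (s*s) * ((starRingEnd ℂ) ω * ω) := by ring
        _ = ((r:ℝ):ℂ) := by rw [hss, hωω, mul_one]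
      ext i l
      rw [Matrix.sum_apply, Fin.sum_univ_castSucc]
      simp only [Fin.snoc_castSucc, Fin.snoc_last]
      have hwt : ∀ m : Fin 6, vecMulVec (w m) (star (w m)) i l
          = (if i = m then (if m = j ∨ m = k then t else 1) else 0)
            * (starRingEnd ℂ) (if l = m then (if m = j ∨ m = k then t else 1) else 0) := by
        intro m
        by_cases hlm : l = m <;> by_cases him : i = m <;> simp [vecMulVec_apply, hw, Pi.single_apply, hlm, him]
      have hsum : ∑ m : Fin 6, vecMulVec (w m) (star (w m)) i l
          = if i = l then (if i = j ∨ i = k then 1 - ((r:ℝ):ℂ) else 1) else 0 := by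
        rcases eq_or_ne i l with rfl | hnl
        · rw [Finset.sum_eq_single i]
          · rw [hwt i, if_pos rfl, if_pos rfl]
            by_cases hc : i = j ∨ i = k
            · simp [hc, htc, htt]
            · simp [hc]
          · intro m _ hmi
            rw [hwt m, if_neg (Ne.symm hmi)]
            simp
          · intro hmem; exact absurd (Finset.mem_univ i) hmem
        · rw [if_neg hnl]
          apply Finset.sum_eq_zero
          intro m _
          rw [hwt m]
          rcases eq_or_ne i m with rfl | him
          · simp [Ne.symm hnl]
          · simp [him]
      rw [hsum]
      have huu : vecMulVec u (star u) i l = u i * (starRingEnd ℂ) (u l) := by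
        simp [vecMulVec_apply]
      rw [huu]
      have hAmat : Amat j k a i l = (if i = l then 1 else 0)
          + (if j = i ∧ k = l then a else 0)
          + (if k = i ∧ j = l then (starRingEnd ℂ) a else 0) := by
        simp [Amat, Matrix.one_apply, Matrix.single]
      rw [hAmat]
      have huj : u j = s := by simp [hu]
      have huk : u k = s * (starRingEnd ℂ) ω := by simp [hu, hne']
      have hup : ∀ p, p ≠ j → p ≠ k → u p = 0 := by
        intro p h1 h2; simp [hu, h1, h2]
      clear_value u w
      by_cases hij : i = j
      · by_cases hlj : l = j
        · simp [hij, hlj, huj, hne, hne', p1]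
        by_cases hlk : l = k
        · simp [hij, hlk, huj, huk, hne, hne', p2]
          rw [hsc]
          linear_combination (-ω) * hss - hωa
        · simp [hij, huj, hup l hlj hlk, Ne.symm hlj, Ne.symm hlk, hne']
      by_cases hik : i = k
      · by_cases hlj : l = j
        · simp [hik, hlj, huk, huj, hne, hne', p3]
        by_cases hlk : l = k
        · simp [hik, hlk, huk, hne, hne', p4]
          rw [hsc]
          linear_combination (-(starRingEnd ℂ) ω * ω) * hss - ((r:ℝ):ℂ) * hωω
        · simp [hik, huk, hup l hlj hlk, Ne.symm hlj, Ne.symm hlk, hne]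
      · rw [hup i hij hik]
        have h1 : ¬(i = j ∨ i = k) := by tauto
        have h2 : ¬(j = i ∧ k = l) := fun h => hij h.1.symm
        have h3 : ¬(k = i ∧ j = l) := fun h => hik h.1.symm
        by_cases hil : i = l
        · rw [if_pos hil, if_pos hil, if_neg h1, if_neg h2, if_neg h3]; ring
        · rw [if_neg hil, if_neg hil, if_neg h2, if_neg h3]; ring
end

section
/- Let a ∈ ℂ and let A_a be the 6×6 Hermitian matrix equal to the identity matrix except that its (1,6) entry is a and its (6,1) entry is ā. Then A_a is weakly positive if and only if |a| ≤ 2. -/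
open Matrix
open scoped ComplexOrder

lemma quadForm_eq (a : ℂ) (z : Fin 6 → ℂ) :
    star z ⬝ᵥ (Amat 0 5 a).mulVec z =
      ((Complex.normSq (z 0) + Complex.normSq (z 1) + Complex.normSq (z 2) +
        Complex.normSq (z 3) + Complex.normSq (z 4) + Complex.normSq (z 5) +
        2 * (a * (starRingEnd ℂ (z 0) * z 5)).re : ℝ) : ℂ) := by
  have h : star z ⬝ᵥ (Amat 0 5 a).mulVec z =
      (starRingEnd ℂ (z 0) * z 0 + starRingEnd ℂ (z 1) * z 1 + starRingEnd ℂ (z 2) * z 2 +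
       starRingEnd ℂ (z 3) * z 3 + starRingEnd ℂ (z 4) * z 4 + starRingEnd ℂ (z 5) * z 5) +
      (a * (starRingEnd ℂ (z 0) * z 5) + starRingEnd ℂ (a * (starRingEnd ℂ (z 0) * z 5))) := by
    simp [Amat, mulVec, dotProduct, Fin.sum_univ_six, Matrix.one_apply, Matrix.single,
      Pi.star_apply]
    ring
  rw [h]
  push_cast
  rw [Complex.add_conj]
  simp [Complex.normSq_eq_conj_mul_self]


/-- The Błocki–Pliś matrix A_a (identity except entries (1,6) = a and
(6,1) = conj a; 0-indexed (0,5) and (5,0)) is weakly positive if and only if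
|a| ≤ 2. -/
theorem AmatBP_weaklyPositive_iff (a : ℂ) :
    WeaklyPositive (Amat 0 5 a) ↔ ‖a‖ ≤ 2 := by
  constructor
  · intro hW
    by_cases ha : a = 0
    · simp [ha]
    set r : ℝ := ‖a‖ with hr
    have hr0 : (0:ℝ) < r := norm_pos_iff.mpr ha
    set z : Fin 6 → ℂ := ![1, 1, 0, 0, starRingEnd ℂ a / r, -(starRingEnd ℂ a / r)] with hz
    have e0 : z 0 = 1 := rfl
    have e1 : z 1 = 1 := rfl
    have e2 : z 2 = 0 := rfl
    have e3 : z 3 = 0 := rfl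
    have e4 : z 4 = starRingEnd ℂ a / r := rfl
    have e5 : z 5 = -(starRingEnd ℂ a / r) := rfl
    have hmem : z ∈ PluckerQuadric := by
      simp only [PluckerQuadric, Set.mem_setOf_eq, e0, e1, e2, e3, e4, e5]
      ring
    have h := hW z hmem
    rw [quadForm_eq] at h
    have hcross : (a * (starRingEnd ℂ (z 0) * z 5)) = (-r : ℂ) := by
      simp only [e0, e5, _root_.map_one]
      have hrne : (r : ℂ) ≠ 0 := by exact_mod_cast hr0.ne'
      field_simp
      rw [Complex.mul_conj]
      norm_cast
      rw [Complex.normSq_eq_norm_sq, ← hr]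
    have hn4 : Complex.normSq (z 4) = 1 := by
      rw [e4, map_div₀, Complex.normSq_conj, Complex.normSq_ofReal, Complex.normSq_eq_norm_sq, ← hr]
      field_simp
    have hn5 : Complex.normSq (z 5) = 1 := by
      rw [e5, Complex.normSq_neg, map_div₀, Complex.normSq_conj, Complex.normSq_ofReal,
        Complex.normSq_eq_norm_sq, ← hr]
      field_simp
    rw [hcross, e0, e1, e2, e3, hn4, hn5] at h
    have h' : (0:ℝ) ≤ Complex.normSq 1 + Complex.normSq 1 + Complex.normSq 0 +
        Complex.normSq 0 + 1 + 1 + 2 * ((-r : ℂ)).re := by exact_mod_cast h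
    simp [Complex.neg_re, Complex.ofReal_re] at h'
    linarith
  · intro ha z hmem
    rw [quadForm_eq]
    rw [Complex.zero_le_real]
    set w := a * (starRingEnd ℂ (z 0) * z 5) with hw
    have habs : ‖w‖ = ‖a‖ * (‖z 0‖ * ‖z 5‖) := by
      simp [hw, _root_.map_mul]
    have hre : -(‖a‖ * (‖z 0‖ * ‖z 5‖)) ≤ w.re := by
      rw [← habs]; exact (abs_le.mp (Complex.abs_re_le_norm w)).1
    have hq : ‖z 0‖ * ‖z 5‖ ≤
        ‖z 1‖ * ‖z 4‖ + ‖z 2‖ * ‖z 3‖ := by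
      have h0 : z 0 * z 5 = -(z 1 * z 4 + z 2 * z 3) := by
        have := hmem; simp only [PluckerQuadric, Set.mem_setOf_eq] at this; linear_combination this
      calc ‖z 0‖ * ‖z 5‖ = ‖z 0 * z 5‖ :=
            (norm_mul _ _).symm
        _ = ‖z 1 * z 4 + z 2 * z 3‖ := by rw [h0, norm_neg]
        _ ≤ ‖z 1 * z 4‖ + ‖z 2 * z 3‖ := norm_add_le _ _
        _ = _ := by rw [norm_mul, norm_mul]
    have hc : ∀ i, Complex.normSq (z i) = (‖z i‖)^2 := fun i => (Complex.sq_norm _).symm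
    rw [hc 0, hc 1, hc 2, hc 3, hc 4, hc 5]
    have h0 := norm_nonneg (z 0)
    have h5 := norm_nonneg (z 5)
    have h1 := norm_nonneg (z 1)
    have h2 := norm_nonneg (z 2)
    have h3 := norm_nonneg (z 3)
    have h4 := norm_nonneg (z 4)
    nlinarith [sq_nonneg (‖z 0‖ - ‖z 5‖),
      sq_nonneg (‖z 1‖ - ‖z 4‖),
      sq_nonneg (‖z 2‖ - ‖z 3‖),
      mul_nonneg h0 h5, mul_le_mul_of_nonneg_right ha (mul_nonneg h0 h5)]
end

section
/- Let a ∈ ℂ and let A_a be the 6×6 Hermitian matrix equal to the identity matrix except that its (1,6) entry is a and its (6,1) entry is ā. Then A_a is strictly weakly positive if and only if |a| < 2. -/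
open Matrix
open scoped ComplexOrder

lemma quadForm (a : ℂ) (z : Fin 6 → ℂ) :
    star z ⬝ᵥ (Amat 0 5 a).mulVec z =
      (∑ i, starRingEnd ℂ (z i) * z i) + a * starRingEnd ℂ (z 0) * z 5
        + starRingEnd ℂ a * starRingEnd ℂ (z 5) * z 0 := by
  simp [Amat, mulVec, dotProduct, Matrix.one_apply, Matrix.single,
    Fin.sum_univ_six, Pi.star_apply, Matrix.add_apply, Matrix.of_apply]
  ring


/-- The Błocki–Pliś matrix A_a (identity except entries (1,6) = a and
(6,1) = conj a; 0-indexed (0,5) and (5,0)) is strictly weakly positive if and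
only if |a| < 2. -/
theorem AmatBP_strictlyWeaklyPositive_iff (a : ℂ) :
    StrictlyWeaklyPositive (Amat 0 5 a) ↔ ‖a‖ < 2 := by
  constructor
  · intro h
    by_cases ha : a = 0
    · simp [ha]
    · set r : ℝ := ‖a‖ with hr
      have hr0 : (0:ℝ) < r := norm_pos_iff.mpr ha
      set z : Fin 6 → ℂ := ![(r:ℂ), starRingEnd ℂ a, 0, 0, (r:ℂ), -(starRingEnd ℂ a)]
        with hzdef
      have e0 : z 0 = (r:ℂ) := rfl
      have e1 : z 1 = starRingEnd ℂ a := rfl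
      have e2 : z 2 = 0 := rfl
      have e3 : z 3 = 0 := rfl
      have e4 : z 4 = (r:ℂ) := rfl
      have e5 : z 5 = -(starRingEnd ℂ a) := rfl
      have hmem : z ∈ PluckerQuadric := by
        simp only [PluckerQuadric, Set.mem_setOf_eq, e0, e1, e2, e3, e4, e5]
        ring
      have hne : z ≠ 0 := by
        intro h0
        have : z 0 = 0 := by rw [h0]; rfl
        rw [e0] at this
        exact hr0.ne' (by exact_mod_cast this)
      have hpos := h z hmem hne
      rw [quadForm] at hpos
      have haa : a * starRingEnd ℂ a = (r:ℂ)^2 := by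
        rw [Complex.mul_conj, Complex.normSq_eq_norm_sq]; norm_cast
      have hval : (∑ i, starRingEnd ℂ (z i) * z i) + a * starRingEnd ℂ (z 0) * z 5
          + starRingEnd ℂ a * starRingEnd ℂ (z 5) * z 0
          = ((4*r^2 - 2*r^3 : ℝ) : ℂ) := by
        rw [Fin.sum_univ_six, e0, e1, e2, e3, e4, e5]
        simp only [map_zero, _root_.map_neg, Complex.conj_conj, Complex.conj_ofReal]
        push_cast
        linear_combination (2 - 2*(r:ℂ)) * haa
      rw [hval] at hpos
      have h4 : (0:ℝ) < 4*r^2 - 2*r^3 := by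
        rw [Complex.zero_lt_real] at hpos; exact hpos
      nlinarith
  · intro ha z hz hne
    rw [quadForm]
    have hsum : ∀ i : Fin 6, starRingEnd ℂ (z i) * z i = ((Complex.normSq (z i) : ℝ) : ℂ) := by
      intro i; rw [mul_comm, Complex.mul_conj]
    set w : ℂ := a * starRingEnd ℂ (z 0) * z 5 with hwdef
    have h3 : starRingEnd ℂ a * starRingEnd ℂ (z 5) * z 0 = starRingEnd ℂ w := by
      rw [hwdef]; simp only [_root_.map_mul, Complex.conj_conj]; ring
    have heq : (∑ i, starRingEnd ℂ (z i) * z i) + w + starRingEnd ℂ a * starRingEnd ℂ (z 5) * z 0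
        = (((∑ i, Complex.normSq (z i)) + 2 * w.re : ℝ) : ℂ) := by
      rw [h3, add_assoc, Complex.add_conj, Finset.sum_congr rfl (fun i _ => hsum i)]
      push_cast
      ring_nf
    rw [heq, Complex.zero_lt_real]
    set n : Fin 6 → ℝ := fun i => ‖z i‖ with hn
    have hnn : ∀ i, 0 ≤ n i := fun i => norm_nonneg _
    have hnsq : ∀ i, Complex.normSq (z i) = n i ^ 2 := by
      intro i; rw [Complex.normSq_eq_norm_sq]
    have hSpos : 0 < ∑ i, Complex.normSq (z i) := by
      obtain ⟨i, hi⟩ := Function.ne_iff.1 hne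
      exact Finset.sum_pos' (fun j _ => Complex.normSq_nonneg _)
        ⟨i, Finset.mem_univ _, Complex.normSq_pos.2 hi⟩
    have hre : -‖w‖ ≤ w.re := (abs_le.1 (Complex.abs_re_le_norm w)).1
    have habsw : ‖w‖ = ‖a‖ * (n 0 * n 5) := by
      rw [hwdef, norm_mul, norm_mul, Complex.norm_conj]
      simp only [hn]
      ring
    have hquad : n 0 * n 5 ≤ n 1 * n 4 + n 2 * n 3 := by
      have h05 : z 0 * z 5 = -(z 1 * z 4 + z 2 * z 3) := by
        have := hz; simp only [PluckerQuadric, Set.mem_setOf_eq] at this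
        linear_combination this
      have : ‖z 0 * z 5‖ ≤ ‖z 1 * z 4‖ + ‖z 2 * z 3‖ := by
        rw [h05, norm_neg]
        exact norm_add_le _ _
      rw [norm_mul, norm_mul, norm_mul] at this
      simp only [hn]
      exact this
    have habs0 : 0 ≤ ‖a‖ := norm_nonneg a
    rw [Fin.sum_univ_six] at hSpos ⊢
    simp only [hnsq] at hSpos ⊢
    nlinarith [sq_nonneg (n 1 - n 4), sq_nonneg (n 2 - n 3), sq_nonneg (n 0 - n 5),
      mul_nonneg (mul_nonneg habs0 (hnn 0)) (hnn 5),
      mul_le_mul_of_nonneg_left hquad habs0,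
      mul_nonneg (hnn 1) (hnn 4), mul_nonneg (hnn 2) (hnn 3)]
end

section
/- Let a ∈ ℂ and let A_a be the 6×6 Hermitian matrix equal to the identity matrix except that its (1,6) entry is a and its (6,1) entry is ā. Then A_a is strongly positive if and only if |a| ≤ 1. -/
open Matrix
open scoped ComplexOrder

private lemma quad_sum' {n : ℕ} (M : Fin n → Matrix (Fin 6) (Fin 6) ℂ) (w : Fin 6 → ℂ) :
    star w ⬝ᵥ (∑ i, M i).mulVec w = ∑ i, star w ⬝ᵥ (M i).mulVec w := by
  let φ : Matrix (Fin 6) (Fin 6) ℂ →+ ℂ :=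
    { toFun := fun A => star w ⬝ᵥ A.mulVec w
      map_zero' := by simp
      map_add' := by intro A B; simp [Matrix.add_mulVec, dotProduct_add] }
  exact map_sum φ M Finset.univ

private lemma outer_nonneg' (u w : Fin 6 → ℂ) :
    0 ≤ star w ⬝ᵥ (vecMulVec u (star u)).mulVec w := by
  have h : star w ⬝ᵥ (vecMulVec u (star u)).mulVec w = (star w ⬝ᵥ u) * (star u ⬝ᵥ w) := by
    simp [Matrix.mulVec, dotProduct, Matrix.vecMulVec_apply, Fin.sum_univ_six]
    ring
  rw [h, Matrix.star_dotProduct]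
  exact star_mul_self_nonneg _

private noncomputable def cc' (a : ℂ) : ℝ := Real.sqrt (1 - Complex.normSq a)

private def vec6' (x0 x1 x2 x3 x4 x5 : ℂ) : Fin 6 → ℂ := fun j =>
  if j = 0 then x0 else if j = 1 then x1 else if j = 2 then x2
  else if j = 3 then x3 else if j = 4 then x4 else x5

private noncomputable def vv' (a : ℂ) : Fin 8 → Fin 6 → ℂ := fun i =>
  if i = 0 then vec6' (a/2) (-(a/2)) 0 0 (1/2) (1/2)
  else if i = 1 then vec6' (a/2) (-(Complex.I*a/2)) 0 0 (-(Complex.I/2)) (1/2)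
  else if i = 2 then vec6' (a/2) (a/2) 0 0 (-(1/2)) (1/2)
  else if i = 3 then vec6' (a/2) (Complex.I*a/2) 0 0 (Complex.I/2) (1/2)
  else if i = 4 then vec6' ((cc' a : ℝ) : ℂ) 0 0 0 0 0
  else if i = 5 then vec6' 0 ((cc' a : ℝ) : ℂ) 0 0 0 0
  else if i = 6 then vec6' 0 0 1 0 0 0
  else vec6' 0 0 0 1 0 0

private lemma vv'_mem (a : ℂ) : ∀ i, vv' a i ∈ PluckerQuadric := by
  intro i
  fin_cases i <;>
    simp [vv', vec6', PluckerQuadric] <;> ring_nf <;> simp [Complex.I_sq]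

set_option maxHeartbeats 2000000 in
private lemma vv'_sum (a : ℂ) (h : Complex.normSq a ≤ 1) :
    Amat 0 5 a = ∑ i, vecMulVec (vv' a i) (star (vv' a i)) := by
  have hc : ((cc' a : ℝ) : ℂ) * ((cc' a : ℝ) : ℂ) = 1 - a * (starRingEnd ℂ) a := by
    rw [Complex.mul_conj, ← Complex.ofReal_mul, cc', Real.mul_self_sqrt (by linarith)]
    push_cast; ring
  have h2 : (starRingEnd ℂ) 2 = 2 := by
    rw [show (2:ℂ) = ((2:ℝ):ℂ) by norm_num, Complex.conj_ofReal]
  ext i j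
  fin_cases i <;> fin_cases j <;>
    simp [Amat, vv', vec6', Fin.sum_univ_eight, Matrix.vecMulVec_apply, Matrix.single,
      Matrix.one_apply, Matrix.add_apply, Matrix.sum_apply, Complex.conj_I, map_div₀, h2,
      Complex.I_sq]
  all_goals first
    | rfl
    | ring1
    | linear_combination hc
    | linear_combination -hc
    | linear_combination (a/2) * Complex.I_sq
    | linear_combination ((starRingEnd ℂ) a/2) * Complex.I_sq
    | linear_combination ((1:ℂ)/2) * Complex.I_sq
    | linear_combination -hc + (a * (starRingEnd ℂ) a/2) * Complex.I_sq

/-- The Błocki–Pliś matrix A_a (identity except entries (1,6) = a and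
(6,1) = conj a; 0-indexed (0,5) and (5,0)) is strongly positive if and only if
|a| ≤ 1. -/
theorem AmatBP_stronglyPositive_iff (a : ℂ) :
    StronglyPositive (Amat 0 5 a) ↔ ‖a‖ ≤ 1 := by
  constructor
  · rintro ⟨n, v, hPl, hA⟩
    by_cases h0 : a = 0
    · simp [h0]
    · set w : Fin 6 → ℂ :=
        fun i => if i = 0 then a else if i = 5 then (-((‖a‖ : ℝ) : ℂ)) else 0 with hw
      have hnn : 0 ≤ star w ⬝ᵥ (Amat 0 5 a).mulVec w := by
        rw [hA, quad_sum']
        exact Finset.sum_nonneg fun i _ => outer_nonneg' _ _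
      have h1 : a * (starRingEnd ℂ) a = ((‖a‖ : ℝ) : ℂ)^2 := by
        rw [Complex.mul_conj, Complex.normSq_eq_norm_sq]; push_cast; ring
      have hval : star w ⬝ᵥ (Amat 0 5 a).mulVec w
          = ((2 * ‖a‖ ^ 2 - 2 * ‖a‖ ^ 3 : ℝ) : ℂ) := by
        simp [hw, Amat, Matrix.mulVec, dotProduct, Fin.sum_univ_six,
          Matrix.single, Matrix.one_apply, Matrix.add_apply]
        ring_nf
        linear_combination (1 - 2*((‖a‖:ℝ):ℂ)) * h1
      rw [hval] at hnn
      have hr : (0:ℝ) ≤ 2 * ‖a‖ ^ 2 - 2 * ‖a‖ ^ 3 := by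
        rwa [Complex.zero_le_real] at hnn
      have habs : 0 < ‖a‖ := norm_pos_iff.mpr h0
      nlinarith [mul_pos habs habs]
  · intro h
    have hns : Complex.normSq a ≤ 1 := by
      rw [← Complex.sq_norm]
      nlinarith [norm_nonneg a]
    exact ⟨8, vv' a, vv'_mem a, vv'_sum a hns⟩
end

section
/- Let a ∈ ℂ with 1 < |a| ≤ 2 and let A_a be the 6×6 Hermitian matrix equal to the identity matrix except that its (1,6) entry is a and its (6,1) entry is ā. Then A_a is weakly positive but not positive semidefinite, i.e. there exists z ∈ ℂ⁶ with z̄ᵗ A_a z < 0. -/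
open Matrix
open scoped ComplexOrder

lemma Amat_apply' (a : ℂ) (i j : Fin 6) :
    Amat 0 5 a i j = (if i = j then 1 else 0) + (if i = 0 ∧ j = 5 then a else 0) +
      (if i = 5 ∧ j = 0 then starRingEnd ℂ a else 0) := by
  simp [Amat, Matrix.single_apply, Matrix.one_apply, eq_comm]

lemma form_eq (a : ℂ) (z : Fin 6 → ℂ) :
    star z ⬝ᵥ (Amat 0 5 a).mulVec z =
      (starRingEnd ℂ (z 0) * z 0 + starRingEnd ℂ (z 1) * z 1 + starRingEnd ℂ (z 2) * z 2 +
       starRingEnd ℂ (z 3) * z 3 + starRingEnd ℂ (z 4) * z 4 + starRingEnd ℂ (z 5) * z 5) +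
      (a * starRingEnd ℂ (z 0) * z 5 + starRingEnd ℂ (a * starRingEnd ℂ (z 0) * z 5)) := by
  simp only [dotProduct, mulVec, Fin.sum_univ_six, Amat_apply', Pi.star_apply, RingHom.star_def]
  simp only [Fin.reduceEq, and_self, and_true, and_false, true_and, false_and, if_true, if_false,
    ite_true, ite_false, add_zero, zero_add, mul_zero, zero_mul, mul_one, one_mul,
    _root_.map_mul, Complex.conj_conj, Complex.star_def]
  ring

lemma form_eq' (a : ℂ) (z : Fin 6 → ℂ) :
    star z ⬝ᵥ (Amat 0 5 a).mulVec z =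
      ((Complex.normSq (z 0) + Complex.normSq (z 1) + Complex.normSq (z 2) +
        Complex.normSq (z 3) + Complex.normSq (z 4) + Complex.normSq (z 5) +
        2 * (a * starRingEnd ℂ (z 0) * z 5).re : ℝ) : ℂ) := by
  rw [form_eq, Complex.add_conj]
  simp only [← Complex.normSq_eq_conj_mul_self]
  push_cast
  ring

/-- For 1 < |a| ≤ 2, the Błocki–Pliś matrix A_a (identity except entries
(1,6) = a and (6,1) = conj a; 0-indexed (0,5) and (5,0)) is weakly positive
but not positive semidefinite: there is z ∈ ℂ⁶ with z̄ᵗ A_a z < 0. -/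
theorem AmatBP_weaklyPositive_not_posSemidef (a : ℂ)
    (h1 : 1 < ‖a‖) (h2 : ‖a‖ ≤ 2) :
    WeaklyPositive (Amat 0 5 a) ∧
    ∃ z : Fin 6 → ℂ, (star z ⬝ᵥ (Amat 0 5 a).mulVec z).re < 0 := by
  constructor
  · intro z hz
    rw [form_eq']
    rw [Complex.zero_le_real]
    have h05 : z 0 * z 5 = -(z 1 * z 4 + z 2 * z 3) := by
      have := hz; simp only [PluckerQuadric, Set.mem_setOf_eq] at this; linear_combination this
    have ht : ‖z 0‖ * ‖z 5‖ ≤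
        ‖z 1‖ * ‖z 4‖ + ‖z 2‖ * ‖z 3‖ := by
      calc ‖z 0‖ * ‖z 5‖ = ‖z 0 * z 5‖ := (norm_mul _ _).symm
        _ = ‖z 1 * z 4 + z 2 * z 3‖ := by rw [h05, norm_neg]
        _ ≤ ‖z 1 * z 4‖ + ‖z 2 * z 3‖ := norm_add_le _ _
        _ = _ := by rw [norm_mul, norm_mul]
    have hw : -(‖a‖ * (‖z 0‖ * ‖z 5‖)) ≤
        (a * starRingEnd ℂ (z 0) * z 5).re := by
      have h := abs_le.mp (Complex.abs_re_le_norm (a * starRingEnd ℂ (z 0) * z 5))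
      have : ‖a * starRingEnd ℂ (z 0) * z 5‖ =
          ‖a‖ * (‖z 0‖ * ‖z 5‖) := by
        rw [norm_mul, norm_mul, Complex.norm_conj]; ring
      linarith [h.1, this ▸ h.1]
    have hs : ∀ i, Complex.normSq (z i) = ‖z i‖ ^ 2 := fun i =>
      (Complex.sq_norm (z i)).symm
    simp only [hs]
    have hnn : ∀ i, 0 ≤ ‖z i‖ := fun i => (norm_nonneg _)
    nlinarith [sq_nonneg (‖z 0‖ - ‖z 5‖),
      sq_nonneg (‖z 1‖ - ‖z 4‖),
      sq_nonneg (‖z 2‖ - ‖z 3‖),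
      hnn 0, hnn 1, hnn 2, hnn 3, hnn 4, hnn 5,
      mul_nonneg (mul_nonneg (hnn 0) (hnn 5)) (sub_nonneg.mpr h2),
      mul_le_mul_of_nonneg_left ht (le_of_lt (lt_trans one_pos h1))]
  · refine ⟨![1, 0, 0, 0, 0, -(starRingEnd ℂ a)], ?_⟩
    rw [form_eq']
    simp only [Complex.ofReal_re, Matrix.cons_val_zero, Matrix.cons_val_one, Matrix.head_cons]
    have h5 : (![1, 0, 0, 0, 0, -(starRingEnd ℂ a)] : Fin 6 → ℂ) 5 = -(starRingEnd ℂ a) := rfl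
    have h0 : (![1, 0, 0, 0, 0, -(starRingEnd ℂ a)] : Fin 6 → ℂ) 0 = 1 := rfl
    have h1' : (![1, 0, 0, 0, 0, -(starRingEnd ℂ a)] : Fin 6 → ℂ) 1 = 0 := rfl
    have h2' : (![1, 0, 0, 0, 0, -(starRingEnd ℂ a)] : Fin 6 → ℂ) 2 = 0 := rfl
    have h3' : (![1, 0, 0, 0, 0, -(starRingEnd ℂ a)] : Fin 6 → ℂ) 3 = 0 := rfl
    have h4' : (![1, 0, 0, 0, 0, -(starRingEnd ℂ a)] : Fin 6 → ℂ) 4 = 0 := rfl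
    rw [h5, h2', h3', h4']
    have hre : (a * starRingEnd ℂ (1 : ℂ) * -(starRingEnd ℂ a)).re = -Complex.normSq a := by
      rw [_root_.map_one, mul_one, mul_neg, Complex.mul_conj]
      simp
    rw [hre]
    have hab : Complex.normSq a = ‖a‖ ^ 2 := (Complex.sq_norm a).symm
    simp only [Complex.normSq_one, Complex.normSq_zero, Complex.normSq_neg, Complex.normSq_conj]
    nlinarith [hab, h1]
end

section
/- Let a ∈ ℂ with 2 < |a| ≤ 3 and let A_a be the 6×6 Hermitian matrix equal to the identity matrix except that its (1,6) entry is a and its (6,1) entry is ā. Then every off-diagonal entry of A_a satisfies |(A_a)_{j,k}| ≤ (trace A_a)/2 for all j ≠ k, yet A_a is not weakly positive. Hence the trace bound on off-diagonal entries is necessary but not sufficient for weak positivity. -/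
open Matrix
open scoped ComplexOrder

/-- For 2 < |a| ≤ 3, the Błocki–Pliś matrix A_a (identity except entries
(1,6) = a and (6,1) = conj a; 0-indexed (0,5) and (5,0)) has all off-diagonal
entries bounded in modulus by (trace A_a)/2, yet is not weakly positive: the
trace bound is necessary but not sufficient for weak positivity. -/
theorem AmatBP_trace_bound_not_sufficient (a : ℂ)
    (h2 : 2 < ‖a‖) (h3 : ‖a‖ ≤ 3) :
    (∀ j k : Fin 6, j ≠ k →
      ‖Amat 0 5 a j k‖ ≤ ((Amat 0 5 a).trace).re / 2) ∧
    ¬ WeaklyPositive (Amat 0 5 a) := by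
  have ha0 : a ≠ 0 := by
    intro h; rw [h] at h2; simp at h2; linarith
  have habs : (0:ℝ) < ‖a‖ := by linarith
  have htr : ((Amat 0 5 a).trace).re = 6 := by
    simp [Amat, Matrix.trace, Matrix.diag, Fin.sum_univ_six, Matrix.one_apply,
      Matrix.single]
    norm_num
  constructor
  · intro j k hjk
    rw [htr]
    fin_cases j <;> fin_cases k <;>
      simp_all [Amat, Matrix.one_apply, Matrix.single] <;> linarith
  · intro hWP
    set b : ℂ := (starRingEnd ℂ) a / ((‖a‖ : ℝ) : ℂ) with hbdef
    have hab : a * b = ((‖a‖ : ℝ) : ℂ) := by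
      rw [hbdef, mul_div_assoc', Complex.mul_conj, Complex.normSq_eq_norm_sq]
      push_cast
      rw [sq]
      field_simp
    have hbabs : ‖b‖ = 1 := by
      rw [hbdef, norm_div, Complex.norm_conj, Complex.norm_real, Real.norm_of_nonneg habs.le]
      field_simp
    have hbb : (starRingEnd ℂ) b * b = 1 := by
      rw [mul_comm, Complex.mul_conj, Complex.normSq_eq_norm_sq, hbabs]
      norm_num
    have hab' : (starRingEnd ℂ) a * (starRingEnd ℂ) b = ((‖a‖ : ℝ) : ℂ) := by
      have := congrArg (starRingEnd ℂ) hab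
      simpa using this
    have h5 : (![1, b, 0, 0, 1, -b] : Fin 6 → ℂ) 5 = -b := rfl
    have hzq : (![1, b, 0, 0, 1, -b] : Fin 6 → ℂ) ∈ PluckerQuadric := by
      simp [PluckerQuadric, h5]
    have hval := hWP _ hzq
    have hcomp : star (![1, b, 0, 0, 1, -b] : Fin 6 → ℂ) ⬝ᵥ
        (Amat 0 5 a).mulVec (![1, b, 0, 0, 1, -b] : Fin 6 → ℂ)
        = ((4 - 2 * ‖a‖ : ℝ) : ℂ) := by
      simp [Amat, Matrix.mulVec, dotProduct, Fin.sum_univ_six,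
        Matrix.one_apply, Matrix.single, Pi.star_apply, h5]
      linear_combination (-1 : ℂ) * hab + 2 * hbb - hab'
    rw [hcomp] at hval
    rw [Complex.zero_le_real] at hval
    linarith
end

section
/- Fix indices j < k in {1,…,6} and a ∈ ℂ with |a| ≤ 1. Then for every weakly positive 6×6 Hermitian complex matrix B = (b_{l,m}), one has trace B + 2 Re(a · conj(b_{j,k})) ≥ 0; moreover, if |a| < 1 and B is not the zero matrix, then trace B + 2 Re(a · conj(b_{j,k})) > 0. -/
open Matrix
open scoped ComplexOrder

private lemma phase_bound (v : ℂ) (r : ℝ)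
    (h : ∀ s : ℂ, ‖s‖ = 1 → 2 * (s * v).re ≤ r) :
    2 * ‖v‖ ≤ r := by
  rcases eq_or_ne v 0 with hv | hv
  · simpa [hv] using h 1 (by simp)
  · have habs : (‖v‖ : ℝ) ≠ 0 := by simpa using hv
    have hs : ‖(starRingEnd ℂ) v / (‖v‖ : ℂ)‖ = 1 := by
      simp [norm_div, habs]
    have h2 := h _ hs
    have : ((starRingEnd ℂ) v / (‖v‖ : ℂ) * v) = (‖v‖ : ℂ) := by
      field_simp
      rw [mul_comm, Complex.mul_conj, Complex.normSq_eq_norm_sq]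
      push_cast
      ring
    rw [this] at h2
    simpa using h2

private lemma unit_mul_conj {s : ℂ} (hs : ‖s‖ = 1) : (starRingEnd ℂ) s * s = 1 := by
  rw [mul_comm, Complex.mul_conj, Complex.normSq_eq_norm_sq, hs]
  norm_num

private lemma nd_aux (B : Matrix (Fin 6) (Fin 6) ℂ) (hB : B.IsHermitian) (hW : WeaklyPositive B)
    (j k : Fin 6)
    (hmem : ∀ s : ℂ, (Pi.single j 1 + Pi.single k s) ∈ PluckerQuadric) :
    2 * ‖B j k‖ ≤ (B j j).re + (B k k).re := by
  apply phase_bound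
  intro s hs
  have hq := hW _ (hmem (-s))
  have hQ : star (Pi.single j (1:ℂ) + Pi.single k (-s)) ⬝ᵥ B.mulVec (Pi.single j 1 + Pi.single k (-s))
      = B j j + B k k - (s * B j k) - (starRingEnd ℂ) (s * B j k) := by
    have hkj : B k j = (starRingEnd ℂ) (B j k) := (hB.apply k j).symm
    simp only [star_add, ← Pi.single_star, Matrix.mulVec_add, Matrix.mulVec_single, Pi.smul_apply, op_smul_eq_mul, Matrix.col_apply,
      add_dotProduct, single_dotProduct, Pi.add_apply, star_neg, star_one]
    rw [hkj]
    have hss := unit_mul_conj hs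
    simp only [Complex.star_def, _root_.map_mul]
    linear_combination (B k k) * hss
  rw [hQ] at hq
  have := (Complex.le_def.mp hq).1
  simp only [Complex.zero_re, Complex.sub_re, Complex.add_re, Complex.conj_re] at this
  linarith

private lemma dual_aux (B : Matrix (Fin 6) (Fin 6) ℂ) (hB : B.IsHermitian) (hW : WeaklyPositive B)
    (a b c d : Fin 6)
    (hmem : ∀ s t : ℂ,
      (Pi.single a 1 + Pi.single b s + Pi.single c t + Pi.single d (-(s*t))) ∈ PluckerQuadric) :
    2 * ‖B a d‖ ≤ (B a a).re + (B b b).re + (B c c).re + (B d d).re ∧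
    2 * ‖B b c‖ ≤ (B a a).re + (B b b).re + (B c c).re + (B d d).re := by
  set D : ℝ := (B a a).re + (B b b).re + (B c c).re + (B d d).re with hD
  have h1 : (starRingEnd ℂ) (B a d) = B d a := hB.apply d a
  have h2 : (starRingEnd ℂ) (B b c) = B c b := hB.apply c b
  have hcore : ∀ s t : ℂ, ‖s‖ = 1 → ‖t‖ = 1 →
      2 * ((s * t * B a d).re - ((starRingEnd ℂ) s * t * B b c).re) ≤ D := by
    intro s t hs ht
    have hss := unit_mul_conj hs
    have htt := unit_mul_conj ht
    have hq1 := (Complex.le_def.mp (hW _ (hmem s t))).1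
    have hq2 := (Complex.le_def.mp (hW _ (hmem (-s) (-t)))).1
    have hQ : (star (Pi.single a (1:ℂ) + Pi.single b s + Pi.single c t + Pi.single d (-(s*t))) ⬝ᵥ
          B.mulVec (Pi.single a 1 + Pi.single b s + Pi.single c t + Pi.single d (-(s*t)))) +
        (star (Pi.single a (1:ℂ) + Pi.single b (-s) + Pi.single c (-t) + Pi.single d (-((-s)*(-t)))) ⬝ᵥ
          B.mulVec (Pi.single a 1 + Pi.single b (-s) + Pi.single c (-t) + Pi.single d (-((-s)*(-t))))) =
        2*(B a a + B b b + B c c + B d d)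
          - 2*(s*t*B a d) - 2*((starRingEnd ℂ) (s*t*B a d))
          + 2*((starRingEnd ℂ) s * t * B b c) + 2*((starRingEnd ℂ) ((starRingEnd ℂ) s * t * B b c)) := by
      simp only [star_add, ← Pi.single_star, Matrix.mulVec_add, Matrix.mulVec_single, Pi.smul_apply, op_smul_eq_mul, Matrix.col_apply,
        add_dotProduct, single_dotProduct, Pi.add_apply, star_neg, star_one,
        star_mul', Complex.star_def, _root_.map_mul, map_neg, Complex.conj_conj]
      linear_combination (2*B b b + 2*B d d)*hss + (2*B c c + 2*B d d*((starRingEnd ℂ) s * s))*htt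
        + 2*((starRingEnd ℂ) s * (starRingEnd ℂ) t)*h1 - 2*((starRingEnd ℂ) t * s)*h2
    have hre := congrArg Complex.re hQ
    rw [Complex.add_re] at hre
    simp only [Complex.add_re, Complex.sub_re, Complex.mul_re, Complex.mul_im,
      Complex.conj_re, Complex.conj_im, Complex.re_ofNat, Complex.im_ofNat] at hre
    simp only [Complex.zero_re] at hq1 hq2
    simp only [Complex.mul_re, Complex.mul_im, Complex.conj_re, Complex.conj_im, hD]
    nlinarith [hq1, hq2, hre]
  have hp1 : 2 * ‖B a d - (starRingEnd ℂ) (B b c)‖ ≤ D := by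
    apply phase_bound
    intro s hs
    have key := hcore s 1 hs (by simp)
    have e2 : ((starRingEnd ℂ) s * (B b c)).re = (s * (starRingEnd ℂ) (B b c)).re := by
      rw [← Complex.conj_re ((starRingEnd ℂ) s * (B b c))]
      simp [_root_.map_mul]
    rw [mul_sub, Complex.sub_re]
    simp only [mul_one] at key
    linarith [key, e2.le, e2.ge]
  have hp2 : 2 * ‖B a d + (starRingEnd ℂ) (B b c)‖ ≤ D := by
    apply phase_bound
    intro u hu
    have key := hcore (-(Complex.I) * u) Complex.I (by simpa using hu) (by simp)
    have e3 : -(Complex.I) * u * Complex.I * (B a d) = u * B a d := by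
      ring_nf
      rw [Complex.I_sq]
      ring
    have e4 : (starRingEnd ℂ) (-(Complex.I) * u) * Complex.I * (B b c)
        = -((starRingEnd ℂ) u * B b c) := by
      simp only [_root_.map_mul, map_neg, Complex.conj_I]
      ring_nf
      rw [Complex.I_sq]
      ring
    rw [e3, e4] at key
    have e2 : ((starRingEnd ℂ) u * (B b c)).re = (u * (starRingEnd ℂ) (B b c)).re := by
      rw [← Complex.conj_re ((starRingEnd ℂ) u * (B b c))]
      simp [_root_.map_mul]
    rw [mul_add, Complex.add_re]
    simp only [Complex.neg_re] at key
    linarith [key, e2.le, e2.ge]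
  constructor
  · have tri := norm_add_le (B a d - (starRingEnd ℂ) (B b c))
      (B a d + (starRingEnd ℂ) (B b c))
    have e : (B a d - (starRingEnd ℂ) (B b c)) + (B a d + (starRingEnd ℂ) (B b c))
        = 2 * B a d := by ring
    rw [e, norm_mul] at tri
    simp only [Complex.norm_two] at tri
    linarith
  · have tri := norm_add_le (B a d + (starRingEnd ℂ) (B b c))
      (-(B a d - (starRingEnd ℂ) (B b c)))
    have e : (B a d + (starRingEnd ℂ) (B b c)) + (-(B a d - (starRingEnd ℂ) (B b c)))
        = 2 * (starRingEnd ℂ) (B b c) := by ring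
    rw [e, norm_mul, norm_neg] at tri
    simp only [Complex.norm_two, Complex.norm_conj] at tri
    linarith

private lemma diag_re_nonneg (B : Matrix (Fin 6) (Fin 6) ℂ) (hW : WeaklyPositive B)
    (l : Fin 6) : 0 ≤ (B l l).re := by
  have hm : Pi.single l (1:ℂ) ∈ PluckerQuadric := by
    fin_cases l <;> simp [PluckerQuadric, Pi.single_apply]
  have hq := (Complex.le_def.mp (hW _ hm)).1
  have hQ : star (Pi.single l (1:ℂ)) ⬝ᵥ B.mulVec (Pi.single l 1) = B l l := by
    simp only [← Pi.single_star, star_one, Matrix.mulVec_single, Pi.smul_apply, op_smul_eq_mul, Matrix.col_apply, single_dotProduct,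
      one_mul, mul_one]
  rw [hQ] at hq
  simpa using hq

private lemma trace_re_eq_s18 (B : Matrix (Fin 6) (Fin 6) ℂ) :
    (B.trace).re = (B 0 0).re + (B 1 1).re + (B 2 2).re + (B 3 3).re + (B 4 4).re
      + (B 5 5).re := by
  simp [Matrix.trace, Matrix.diag, Fin.sum_univ_six]

private lemma offdiag_bound (B : Matrix (Fin 6) (Fin 6) ℂ) (hB : B.IsHermitian)
    (hW : WeaklyPositive B) :
    ∀ l m : Fin 6, l < m → 2 * ‖B l m‖ ≤ (B.trace).re := by
  have hd := diag_re_nonneg B hW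
  have htr := trace_re_eq_s18 B
  have d05 := dual_aux B hB hW 0 1 4 5 (by
    intro s t; simp [PluckerQuadric, Pi.single_apply]; try ring)
  have d23 := dual_aux B hB hW 0 2 3 5 (by
    intro s t; simp [PluckerQuadric, Pi.single_apply]; try ring)
  have h01 : 2 * ‖B 0 1‖ ≤ (B.trace).re := by
    rw [htr]
    linarith [nd_aux B hB hW 0 1 (by intro s; simp [PluckerQuadric, Pi.single_apply]), hd 0, hd 1, hd 2, hd 3, hd 4, hd 5]
  have h02 : 2 * ‖B 0 2‖ ≤ (B.trace).re := by
    rw [htr]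
    linarith [nd_aux B hB hW 0 2 (by intro s; simp [PluckerQuadric, Pi.single_apply]), hd 0, hd 1, hd 2, hd 3, hd 4, hd 5]
  have h03 : 2 * ‖B 0 3‖ ≤ (B.trace).re := by
    rw [htr]
    linarith [nd_aux B hB hW 0 3 (by intro s; simp [PluckerQuadric, Pi.single_apply]), hd 0, hd 1, hd 2, hd 3, hd 4, hd 5]
  have h04 : 2 * ‖B 0 4‖ ≤ (B.trace).re := by
    rw [htr]
    linarith [nd_aux B hB hW 0 4 (by intro s; simp [PluckerQuadric, Pi.single_apply]), hd 0, hd 1, hd 2, hd 3, hd 4, hd 5]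
  have h05 : 2 * ‖B 0 5‖ ≤ (B.trace).re := by
    rw [htr]; linarith [d05.1, hd 0, hd 1, hd 2, hd 3, hd 4, hd 5]
  have h12 : 2 * ‖B 1 2‖ ≤ (B.trace).re := by
    rw [htr]
    linarith [nd_aux B hB hW 1 2 (by intro s; simp [PluckerQuadric, Pi.single_apply]), hd 0, hd 1, hd 2, hd 3, hd 4, hd 5]
  have h13 : 2 * ‖B 1 3‖ ≤ (B.trace).re := by
    rw [htr]
    linarith [nd_aux B hB hW 1 3 (by intro s; simp [PluckerQuadric, Pi.single_apply]), hd 0, hd 1, hd 2, hd 3, hd 4, hd 5]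
  have h14 : 2 * ‖B 1 4‖ ≤ (B.trace).re := by
    rw [htr]; linarith [d05.2, hd 0, hd 1, hd 2, hd 3, hd 4, hd 5]
  have h15 : 2 * ‖B 1 5‖ ≤ (B.trace).re := by
    rw [htr]
    linarith [nd_aux B hB hW 1 5 (by intro s; simp [PluckerQuadric, Pi.single_apply]), hd 0, hd 1, hd 2, hd 3, hd 4, hd 5]
  have h23 : 2 * ‖B 2 3‖ ≤ (B.trace).re := by
    rw [htr]; linarith [d23.2, hd 0, hd 1, hd 2, hd 3, hd 4, hd 5]
  have h24 : 2 * ‖B 2 4‖ ≤ (B.trace).re := by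
    rw [htr]
    linarith [nd_aux B hB hW 2 4 (by intro s; simp [PluckerQuadric, Pi.single_apply]), hd 0, hd 1, hd 2, hd 3, hd 4, hd 5]
  have h25 : 2 * ‖B 2 5‖ ≤ (B.trace).re := by
    rw [htr]
    linarith [nd_aux B hB hW 2 5 (by intro s; simp [PluckerQuadric, Pi.single_apply]), hd 0, hd 1, hd 2, hd 3, hd 4, hd 5]
  have h34 : 2 * ‖B 3 4‖ ≤ (B.trace).re := by
    rw [htr]
    linarith [nd_aux B hB hW 3 4 (by intro s; simp [PluckerQuadric, Pi.single_apply]), hd 0, hd 1, hd 2, hd 3, hd 4, hd 5]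
  have h35 : 2 * ‖B 3 5‖ ≤ (B.trace).re := by
    rw [htr]
    linarith [nd_aux B hB hW 3 5 (by intro s; simp [PluckerQuadric, Pi.single_apply]), hd 0, hd 1, hd 2, hd 3, hd 4, hd 5]
  have h45 : 2 * ‖B 4 5‖ ≤ (B.trace).re := by
    rw [htr]
    linarith [nd_aux B hB hW 4 5 (by intro s; simp [PluckerQuadric, Pi.single_apply]), hd 0, hd 1, hd 2, hd 3, hd 4, hd 5]
  intro l m hlm
  fin_cases l <;> fin_cases m <;>
    first
    | exact absurd hlm (by decide)
    | exact h01
    | exact h02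
    | exact h03
    | exact h04
    | exact h05
    | exact h12
    | exact h13
    | exact h14
    | exact h15
    | exact h23
    | exact h24
    | exact h25
    | exact h34
    | exact h35
    | exact h45

/-- Fix j < k (0-indexed) and a ∈ ℂ with |a| ≤ 1. For every weakly positive
6×6 Hermitian matrix B = (b_{l,m}), one has
trace B + 2 Re(a ⋅ conj b_{j,k}) ≥ 0; moreover if |a| < 1 and B ≠ 0 then this
quantity is positive. (It is the coefficient of the volume form in Ω_a ∧ Θ.) -/
theorem Amat_pairing_nonneg (j k : Fin 6) (hjk : j < k) (a : ℂ)
    (ha : ‖a‖ ≤ 1) :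
    ∀ B : Matrix (Fin 6) (Fin 6) ℂ, B.IsHermitian → WeaklyPositive B →
      (0 ≤ (B.trace).re + 2 * (a * (starRingEnd ℂ) (B j k)).re) ∧
      (‖a‖ < 1 → B ≠ 0 →
        0 < (B.trace).re + 2 * (a * (starRingEnd ℂ) (B j k)).re) := by
  intro B hB hW
  have hd := diag_re_nonneg B hW
  have htr := trace_re_eq_s18 B
  have key := offdiag_bound B hB hW j k hjk
  have hTnn : 0 ≤ (B.trace).re := by
    rw [htr]; linarith [hd 0, hd 1, hd 2, hd 3, hd 4, hd 5]
  have habs : |(a * (starRingEnd ℂ) (B j k)).re| ≤ ‖a‖ * ‖B j k‖ := by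
    calc |(a * (starRingEnd ℂ) (B j k)).re| ≤ ‖a * (starRingEnd ℂ) (B j k)‖ :=
        Complex.abs_re_le_norm _
      _ = ‖a‖ * ‖B j k‖ := by
        rw [norm_mul, Complex.norm_conj]
  have habs' : -(‖a‖ * ‖B j k‖) ≤ (a * (starRingEnd ℂ) (B j k)).re :=
    (abs_le.mp habs).1
  have hb0 : 0 ≤ ‖B j k‖ := norm_nonneg _
  have ha0 : 0 ≤ ‖a‖ := norm_nonneg _
  constructor
  · have hprod : 0 ≤ (1 - ‖a‖) * ‖B j k‖ :=
      mul_nonneg (by linarith) hb0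
    nlinarith [key, habs', hprod]
  · intro ha' hBne
    have hT : 0 < (B.trace).re := by
      rcases hTnn.lt_or_eq with h | h
      · exact h
      · exfalso
        apply hBne
        have htr0 : (B.trace).re = 0 := h.symm
        have hdiag0 : ∀ l : Fin 6, B l l = 0 := by
          intro l
          have him : (B l l).im = 0 := by
            have := hB.apply l l
            rw [Complex.star_def] at this
            exact Complex.conj_eq_iff_im.mp this
          have hre : (B l l).re = 0 := by
            rw [htr] at htr0
            have e0 : (B 0 0).re = 0 := by linarith [hd 0, hd 1, hd 2, hd 3, hd 4, hd 5]
            have e1 : (B 1 1).re = 0 := by linarith [hd 0, hd 1, hd 2, hd 3, hd 4, hd 5]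
            have e2 : (B 2 2).re = 0 := by linarith [hd 0, hd 1, hd 2, hd 3, hd 4, hd 5]
            have e3 : (B 3 3).re = 0 := by linarith [hd 0, hd 1, hd 2, hd 3, hd 4, hd 5]
            have e4 : (B 4 4).re = 0 := by linarith [hd 0, hd 1, hd 2, hd 3, hd 4, hd 5]
            have e5 : (B 5 5).re = 0 := by linarith [hd 0, hd 1, hd 2, hd 3, hd 4, hd 5]
            fin_cases l
            · exact e0
            · exact e1
            · exact e2
            · exact e3
            · exact e4
            · exact e5
          exact Complex.ext hre him
        have hoff : ∀ l m : Fin 6, l < m → B l m = 0 := by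
          intro l m hlm
          have h1 := offdiag_bound B hB hW l m hlm
          rw [htr0] at h1
          have h2 : ‖B l m‖ = 0 :=
            le_antisymm (by linarith) (norm_nonneg _)
          exact norm_eq_zero.mp h2
        ext l m
        rcases lt_trichotomy l m with h' | h' | h'
        · simpa using hoff l m h'
        · subst h'; simpa using hdiag0 l
        · simp only [Matrix.zero_apply]
          rw [← hB.apply l m, hoff m l h', star_zero]
    have h4 : ‖a‖ * (2 * ‖B j k‖) ≤ ‖a‖ * (B.trace).re :=
      mul_le_mul_of_nonneg_left key ha0
    have h5 : 0 < (1 - ‖a‖) * (B.trace).re := mul_pos (by linarith) hT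
    nlinarith [habs', h4, h5]
end
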